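/- arXiv:1202.1906 — 10 statements merged into one kernel-verified Lean document; each statement's English description precedes it below -/
import Mathlib

section
/- The quantum signed continuant polynomials satisfy the quantum frieze relation: for all integers m ≥ 1 and i ≥ 1 with i + m ≤ n, one has P_{m,i} P_{m,i+1} = ν P_{m+1,i} P_{m-1,i+1} + 1. -/
/-!
Regard `ν` as a unit `u` of the commutative ring `Subring.center R`, over which `R` is an
algebra, so that all bookkeeping with powers of `ν` is commutative. Each `P m j` then
`q`-commutes with every generator `x t` with `t > j + m`, with the factor of `x j * x t` if `m` is
odd and `1` if `m` is even; for `t = j + m`, relation (R1) adds a multiple of `P (m - 1) j`. Both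
facts pass through the three-term recurrence (`three_term_mul_comm`), and with the second one the
frieze relation for `m + 1` follows from that for `m` by expanding `P (m + 2) i` and
`P (m + 1) (i + 1)` one step (`three_term_frieze`).
-/

namespace QuantumContinuant

section Twist

variable {G : Type*} [Group G]

/-- The factor `q ^ (-1) ^ (d - 1)` of relation (R2), for `d ≥ 1`. -/
def twist (q : G) (d : ℕ) : G := if Even d then q⁻¹ else q

theorem twist_add_of_even (q : G) {a : ℕ} (ha : Even a) (d : ℕ) :
    twist q (a + d) = twist q d := by
  simp [twist, Nat.even_add, ha]

theorem twist_add_mul_twist_of_odd (q : G) {a : ℕ} (ha : Odd a) (d : ℕ) :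
    twist q (a + d) * twist q d = 1 := by
  by_cases hd : Even d <;> simp [twist, Nat.even_add, hd, Nat.not_even_iff_odd.2 ha]

theorem zpow_neg_one_pow_sub_one (q : G) {d : ℕ} (hd : 1 ≤ d) :
    q ^ ((-1 : ℤ) ^ (d - 1)) = twist q d := by
  rcases Nat.even_or_odd d with he | ho
  · have : Odd (d - 1) := Nat.Even.sub_odd hd he odd_one
    simp [twist, he, this.neg_one_pow]
  · have : Even (d - 1) := Nat.Odd.sub_odd ho odd_one
    simp [twist, Nat.not_even_iff_odd.2 ho, this.neg_one_pow]

theorem map_twist {H : Type*} [Group H] (f : G →* H) (q : G) (d : ℕ) :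
    f (twist q d) = twist (f q) d := by
  unfold twist; split_ifs <;> simp

end Twist

variable {K R : Type*} [CommRing K] [Ring R] [Algebra K R]

theorem three_term_mul_comm (α β s r S e : K) {a c d y : R} (hS : s * r = S)
    (ha : a * y = S • (y * a)) (hc : c * y = s • (y * c))
    (hd : d * y = r • (y * d) + algebraMap K R e) :
    α • (c * d - β • a) * y = S • (y * (α • (c * d - β • a))) + (α * e) • c := by
  have hcd : c * d * y = S • (y * (c * d)) + e • c := by
    rw [mul_assoc, hd, mul_add, mul_smul_comm, ← mul_assoc, hc, ← Algebra.commutes,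
      ← Algebra.smul_def, smul_mul_assoc, smul_smul, mul_comm r, hS, mul_assoc]
  rw [smul_mul_assoc, sub_mul, smul_mul_assoc, hcd, ha, mul_smul_comm, mul_sub, mul_smul_comm]
  module

theorem three_term_frieze (α α' β β' s e v : K) {a c a' c' y : R}
    (hA : c' * y = s • (y * c') + e • a') (hIH : a * c' = v • (c * a') + 1)
    (h1 : α * s = v * α') (h2 : α * (e - β) = -v) (h3 : v * (α' * β') = 1) :
    c * (α • (c' * y - β • a')) = v • (α' • (c * y - β' • a) * c') + 1 := by
  rw [mul_smul_comm, mul_sub, hA, smul_mul_assoc, sub_mul, smul_mul_assoc, hIH]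
  simp only [mul_add, mul_smul_comm, ← mul_assoc]
  linear_combination (norm := module)
    h1 • (c * y * c') + (h2 + v * h3) • (c * a') + h3 • (1 : R)

structure IsQuantumContinuant (u : Kˣ) (n : ℕ) (x : ℕ → R) (P : ℕ → ℕ → R) : Prop where
  adjacent : ∀ i, 1 ≤ i → i < n →
    x i * x (i + 1) - 1 = ((u : K) ^ 2) • (x (i + 1) * x i - 1)
  far : ∀ i k, 1 ≤ i → 1 < k → i + k ≤ n →
    x i * x (i + k) = ((twist (u ^ 2) k : Kˣ) : K) • (x (i + k) * x i)
  zero : ∀ i, P 0 i = 1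
  one : ∀ i, P 1 i = x i
  even : ∀ m i, 1 ≤ m → Even m → 1 ≤ i → i + m ≤ n →
    P (m + 1) i = P m i * x (i + m) - ((u⁻¹ : Kˣ) : K) • P (m - 1) i
  odd : ∀ m i, 1 ≤ m → Odd m → 1 ≤ i → i + m ≤ n →
    P (m + 1) i = ((u⁻¹ : Kˣ) : K) • (P m i * x (i + m) - P (m - 1) i)

namespace IsQuantumContinuant

variable {u : Kˣ} {n : ℕ} {x : ℕ → R} {P : ℕ → ℕ → R}

theorem adjacent_eq (h : IsQuantumContinuant u n x P) {i : ℕ} (hi : 1 ≤ i) (hin : i < n) :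
    x i * x (i + 1) =
      ((u : K) ^ 2) • (x (i + 1) * x i) + algebraMap K R (1 - (u : K) ^ 2) := by
  rw [Algebra.algebraMap_eq_smul_one]
  linear_combination (norm := module) h.adjacent i hi hin

theorem succ_succ_eq (h : IsQuantumContinuant u n x P) {m j : ℕ} (hj : 1 ≤ j)
    (hjm : j + m + 1 ≤ n) :
    P (m + 2) j = (if Even m then ((u⁻¹ : Kˣ) : K) else 1) •
      (P (m + 1) j * x (j + (m + 1)) - (if Even m then 1 else ((u⁻¹ : Kˣ) : K)) • P m j) := by
  rcases Nat.even_or_odd m with hm | hm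
  · simpa [hm] using h.odd (m + 1) j le_add_self hm.add_one hj (by omega)
  · simpa [Nat.not_even_iff_odd.2 hm] using h.even (m + 1) j le_add_self hm.add_one hj (by omega)

theorem mul_far_eq (h : IsQuantumContinuant u n x P) (m : ℕ) :
    ∀ j d, 1 ≤ j → m < d → j + d ≤ n →
      P m j * x (j + d) =
        ((if Even m then 1 else twist (u ^ 2) d : Kˣ) : K) • (x (j + d) * P m j) := by
  induction m using Nat.twoStepInduction with
  | zero => intro j d _ _ _; simp [h.zero]
  | one =>
    intro j d hj hd hjd
    simpa [h.one] using h.far j d hj hd hjd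
  | more m ih ih' =>
    intro j d hj hd hjd
    obtain ⟨k, rfl⟩ : ∃ k, d = (m + 1) + k := ⟨d - (m + 1), by omega⟩
    have hS : ((if Even (m + 1) then 1 else twist (u ^ 2) (m + 1 + k) : Kˣ) : K) *
        (twist (u ^ 2) k : Kˣ) =
          ((if Even m then 1 else twist (u ^ 2) (m + 1 + k) : Kˣ) : K) := by
      rw [← Units.val_mul]
      rcases Nat.even_or_odd m with hm | hm
      · simp [hm, twist_add_mul_twist_of_odd _ hm.add_one]
      · simp [Nat.not_even_iff_odd.2 hm, hm.add_one, twist_add_of_even _ hm.add_one]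
    have hx : x (j + (m + 1)) * x (j + (m + 1 + k)) = ((twist (u ^ 2) k : Kˣ) : K) •
        (x (j + (m + 1 + k)) * x (j + (m + 1))) + algebraMap K R 0 := by
      rw [map_zero, add_zero, ← add_assoc j (m + 1)]
      exact h.far _ k (by omega) (by omega) (by omega)
    rw [h.succ_succ_eq hj (by omega)]
    convert three_term_mul_comm _ _ _ _ _ _ hS (ih j _ hj (by omega) hjd)
      (ih' j _ hj (by omega) hjd) hx using 1
    simp only [mul_zero, zero_smul, add_zero, Nat.even_add, even_two, iff_true]

theorem mul_adjacent_eq (h : IsQuantumContinuant u n x P) {m j : ℕ} (hm : 1 ≤ m) (hj : 1 ≤ j)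
    (hjm : j + m ≤ n) :
    P m j * x (j + m) =
      ((if Even m then 1 else twist (u ^ 2) m : Kˣ) : K) • (x (j + m) * P m j) +
      ((if Even m then ((u⁻¹ : Kˣ) : K) else 1) * (1 - (u : K) ^ 2)) • P (m - 1) j := by
  obtain ⟨k, rfl | rfl⟩ : ∃ k, m = 1 ∨ m = k + 2 := ⟨m - 2, by omega⟩
  · simp [h.zero, h.one, h.adjacent_eq hj hjm, twist, Algebra.algebraMap_eq_smul_one]
  · have hS : ((if Even (k + 1) then 1 else twist (u ^ 2) (k + 2) : Kˣ) : K) * (u : K) ^ 2 =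
        ((if Even k then 1 else twist (u ^ 2) (k + 2) : Kˣ) : K) := by
      rcases Nat.even_or_odd k with hk | hk
      · simp [hk, twist, Nat.even_add, ← mul_pow]
      · simp [hk, twist, Nat.even_add, Nat.not_even_iff_odd.2 hk]
    have hx : x (j + (k + 1)) * x (j + (k + 2)) =
        (u : K) ^ 2 • (x (j + (k + 2)) * x (j + (k + 1))) + algebraMap K R (1 - (u : K) ^ 2) :=
      h.adjacent_eq (by omega) (by omega)
    rw [h.succ_succ_eq hj (by omega), show k + 2 - 1 = k + 1 by omega]
    convert three_term_mul_comm _ _ _ _ _ _ hS (h.mul_far_eq k j _ hj (by omega) hjm)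
      (h.mul_far_eq (k + 1) j _ hj (by omega) hjm) hx using 1
    simp only [Nat.even_add, even_two, iff_true]

theorem frieze (h : IsQuantumContinuant u n x P) (k : ℕ) :
    ∀ i, 1 ≤ i → i + k + 1 ≤ n →
      P (k + 1) i * P (k + 1) (i + 1) = (u : K) • (P (k + 2) i * P k (i + 1)) + 1 := by
  induction k with
  | zero =>
    intro i hi hin
    simp [h.zero, h.one, h.succ_succ_eq (m := 0) hi hin, smul_smul]
  | succ k ih =>
    intro i hi hin
    have hA := h.mul_adjacent_eq (m := k + 1) (j := i + 1) le_add_self (by omega) (by omega)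
    rw [Nat.add_sub_cancel] at hA
    rw [h.succ_succ_eq (m := k) (j := i + 1) (by omega) (by omega),
      h.succ_succ_eq (m := k + 1) (j := i) hi (by omega),
      show i + (k + 1 + 1) = i + 1 + (k + 1) by omega]
    refine three_term_frieze _ _ _ _ _ _ _ hA (ih i hi (by omega)) ?_ ?_ ?_
    all_goals by_cases hk : Even k
    all_goals simp [hk, Nat.even_add_one, twist, pow_two, mul_sub]

end IsQuantumContinuant

def centerUnit {R : Type*} [Ring R] (ν : Rˣ) (hν : ∀ r : R, (ν : R) * r = r * ν) :
    (Subring.center R)ˣ :=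
  have hν' : (ν : R) ∈ Subring.center R := Subring.mem_center_iff.2 fun r => (hν r).symm
  ⟨⟨ν, hν'⟩, ⟨↑ν⁻¹, Set.units_inv_mem_center hν'⟩,
    Subtype.ext ν.mul_inv, Subtype.ext ν.inv_mul⟩

theorem map_centerUnit {R : Type*} [Ring R] (ν : Rˣ) (hν : ∀ r : R, (ν : R) * r = r * ν) :
    Units.map (Subring.center R).subtype.toMonoidHom (centerUnit ν hν) = ν :=
  Units.ext rfl

end QuantumContinuant

theorem quantum_frieze_relation_for_signed_continuants_general
    (R : Type*) [Ring R] (n : ℕ)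
    (ν : Rˣ) (hcen : ∀ r : R, (ν : R) * r = r * (ν : R))
    (x : ℕ → R)
    (hR1 : ∀ i, 1 ≤ i → i < n →
      x i * x (i + 1) - 1 = ((ν : R) ^ 2) * (x (i + 1) * x i - 1))
    (hR2 : ∀ i k, 1 ≤ i → 1 < k → i + k ≤ n →
      x i * x (i + k) = (((ν ^ 2 : Rˣ) ^ ((-1 : ℤ) ^ (k - 1)) : Rˣ) : R) * (x (i + k) * x i))
    (P : ℕ → ℕ → R)
    (hP0 : ∀ i, P 0 i = 1)
    (hP1 : ∀ i, P 1 i = x i)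
    (hPeven : ∀ m i, 1 ≤ m → Even m → 1 ≤ i → i + m ≤ n →
      P (m + 1) i = P m i * x (i + m) - ((ν⁻¹ : Rˣ) : R) * P (m - 1) i)
    (hPodd : ∀ m i, 1 ≤ m → Odd m → 1 ≤ i → i + m ≤ n →
      P (m + 1) i = ((ν⁻¹ : Rˣ) : R) * (P m i * x (i + m) - P (m - 1) i)) :
    ∀ m i, 1 ≤ m → 1 ≤ i → i + m ≤ n →
      P m i * P m (i + 1) = (ν : R) * (P (m + 1) i * P (m - 1) (i + 1)) + 1 := by
  open QuantumContinuant in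
  have h : IsQuantumContinuant (centerUnit ν hcen) n x P :=
    { adjacent := hR1
      far := fun i k hi hk hik => by
        have hmap := map_twist (Units.map (Subring.center R).subtype.toMonoidHom)
          (centerUnit ν hcen ^ 2) k
        rw [map_pow, map_centerUnit] at hmap
        rw [hR2 i k hi hk hik, zpow_neg_one_pow_sub_one _ (by omega), ← hmap]
        rfl
      zero := hP0
      one := hP1
      even := hPeven
      odd := hPodd }
  intro m i hm hi hin
  obtain ⟨k, rfl⟩ := Nat.exists_eq_add_of_le' hm
  exact h.frieze k i hi hin

/-- **Quantum frieze relation for quantum signed continuant polynomials.**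
Let `R` be an associative unital ring, `ν ∈ R` a central invertible element, `q = ν²`,
and `x 1, …, x n ∈ R` satisfying the relations (R1) and (R2). Let `P m i` be the quantum
signed continuant polynomials, defined recursively by `P 0 i = 1`, `P 1 i = x i` and the
three-term relations. Then `P m i * P m (i+1) = ν * (P (m+1) i * P (m-1) (i+1)) + 1`
whenever `m ≥ 1`, `i ≥ 1` and `i + m ≤ n`. -/
theorem quantum_frieze_relation_for_signed_continuants
    (R : Type*) [Ring R] (n : ℕ) (hn : 1 ≤ n)
    (ν : Rˣ) (hcen : ∀ r : R, (ν : R) * r = r * (ν : R))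
    (x : ℕ → R)
    (hR1 : ∀ i, 1 ≤ i → i < n →
      x i * x (i + 1) - 1 = ((ν : R) ^ 2) * (x (i + 1) * x i - 1))
    (hR2 : ∀ i k, 1 ≤ i → 1 < k → i + k ≤ n →
      x i * x (i + k) = (((ν ^ 2 : Rˣ) ^ ((-1 : ℤ) ^ (k - 1)) : Rˣ) : R) * (x (i + k) * x i))
    (P : ℕ → ℕ → R)
    (hP0 : ∀ i, P 0 i = 1)
    (hP1 : ∀ i, P 1 i = x i)
    (hPeven : ∀ m i, 1 ≤ m → Even m → 1 ≤ i → i + m ≤ n →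
      P (m + 1) i = P m i * x (i + m) - ((ν⁻¹ : Rˣ) : R) * P (m - 1) i)
    (hPodd : ∀ m i, 1 ≤ m → Odd m → 1 ≤ i → i + m ≤ n →
      P (m + 1) i = ((ν⁻¹ : Rˣ) : R) * (P m i * x (i + m) - P (m - 1) i)) :
    ∀ m i, 1 ≤ m → 1 ≤ i → i + m ≤ n →
      P m i * P m (i + 1) = (ν : R) * (P (m + 1) i * P (m - 1) (i + 1)) + 1 :=
  quantum_frieze_relation_for_signed_continuants_general R n ν hcen x hR1 hR2 P hP0 hP1 hPeven hPodd
end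

section
/- Reversed recursion for quantum signed continuant polynomials, even case: for every even integer m ≥ 1 and every 1 ≤ i ≤ n − m, one has P_{m+1,i} = x_{i+m} P_{m,i} − ν P_{m−1,i}. -/
/-! By two-step induction on `m`, `P m i` commutes with every `x l`, `l > i + m`, when `m` is even,
and `q`-commutes with it exactly as `x i` does when `m` is odd: in the recursion the coefficients of
the two products cancel, resp. agree. For even `m`, write `P m i = ν⁻¹ (D y - E)` with
`D = P (m - 1) i`, `E = P (m - 2) i`, `y = x (i + m - 1)` and put `z = x (i + m)`. Then `E` commutes
with `z`, `z D = q D z`, and (R1) for the adjacent pair `y, z` gives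
`z P m i - P m i z = (ν - ν⁻¹) D`, which turns the defining recursion into the reversed one. -/

def SkewCommute {R : Type*} [Mul R] (c a b : R) : Prop := a * b = c * (b * a)

namespace SkewCommute

section Semigroup

variable {R : Type*} [Semigroup R] {a b c c' w z : R}

theorem mul (ha : SkewCommute c a z) (hb : SkewCommute c' b z) (hc' : ∀ r, Commute c' r) :
    SkewCommute (c' * c) (a * b) z := by
  unfold SkewCommute at *
  rw [mul_assoc, hb, ← (hc' a).left_comm, ← mul_assoc a, ha, mul_assoc, mul_assoc, mul_assoc]

theorem mul_left (hw : ∀ r, Commute w r) (ha : SkewCommute c a z) : SkewCommute c (w * a) z := by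
  unfold SkewCommute at *
  rw [mul_assoc, ha, (hw c).left_comm, (hw z).left_comm]

end Semigroup

theorem sub {R : Type*} [NonUnitalNonAssocRing R] {a b c z : R}
    (ha : SkewCommute c a z) (hb : SkewCommute c b z) : SkewCommute c (a - b) z := by
  unfold SkewCommute at *
  rw [sub_mul, ha, hb, mul_sub, ← mul_sub]

section Monoid

variable {R : Type*} [Monoid R] {a b : R}

theorem one_iff : SkewCommute 1 a b ↔ Commute a b := by
  rw [SkewCommute, one_mul]
  rfl

theorem symm_of_inv {u : Rˣ} (h : SkewCommute ((u⁻¹ : Rˣ) : R) a b) :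
    SkewCommute (u : R) b a := by
  unfold SkewCommute at *
  rw [h, ← mul_assoc, Units.mul_inv, one_mul]

end Monoid

end SkewCommute

theorem neg_one_pow_sub_one_eq (j k : ℕ) (hk : 1 ≤ k) :
    (-1 : ℤ) ^ (k - 1) = -(-1) ^ (j + (j + k)) := by
  obtain ⟨k, rfl⟩ := Nat.exists_eq_add_of_le' hk
  rw [← add_assoc, ← two_mul, pow_add, pow_mul]
  simp [pow_succ]

-- The exponent `(-1) ^ (l - j - 1)` of (R2) is written as `-(-1) ^ (j + l)`, free of truncated
-- subtraction.
theorem skewCommute_zpow_neg_neg_one_pow_add {R : Type*} [Monoid R] {n : ℕ} {q : Rˣ}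
    {x : ℕ → R} (hx : ∀ i k, 1 ≤ i → 1 < k → i + k ≤ n →
      x i * x (i + k) = ((q ^ ((-1 : ℤ) ^ (k - 1)) : Rˣ) : R) * (x (i + k) * x i)) :
    ∀ j l, 1 ≤ j → j + 2 ≤ l → l ≤ n →
      SkewCommute ((q ^ (-(-1 : ℤ) ^ (j + l)) : Rˣ) : R) (x j) (x l) := by
  intro j l hj hjl hln
  obtain ⟨d, rfl⟩ := Nat.exists_eq_add_of_le (show j ≤ l by omega)
  rw [← neg_one_pow_sub_one_eq j d (by omega)]
  exact hx j d hj (by omega) hln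

theorem continuant_skewCommute {R : Type*} [Ring R] {n : ℕ} {q : Rˣ} {w : R} {x : ℕ → R}
    {P : ℕ → ℕ → R} (hq : ∀ r, Commute (q : R) r) (hw : ∀ r, Commute w r)
    (hx : ∀ j l, 1 ≤ j → j + 2 ≤ l → l ≤ n →
      SkewCommute ((q ^ (-(-1 : ℤ) ^ (j + l)) : Rˣ) : R) (x j) (x l))
    (hP0 : ∀ i, P 0 i = 1) (hP1 : ∀ i, P 1 i = x i)
    (hPeven : ∀ m i, 1 ≤ m → Even m → 1 ≤ i → i + m ≤ n →
      P (m + 1) i = P m i * x (i + m) - w * P (m - 1) i)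
    (hPodd : ∀ m i, 1 ≤ m → Odd m → 1 ≤ i → i + m ≤ n →
      P (m + 1) i = w * (P m i * x (i + m) - P (m - 1) i))
    {i l : ℕ} (hi : 1 ≤ i) (hl : l ≤ n) (m : ℕ) (hml : i + m < l) :
    SkewCommute ((q ^ (if Even m then 0 else -(-1 : ℤ) ^ (i + l)) : Rˣ) : R) (P m i) (x l) := by
  induction m using Nat.twoStepInduction with
  | zero => simp [SkewCommute, hP0]
  | one => simpa [hP1] using hx i l hi (by omega) hl
  | more k ihk ihk1 =>
    have hPk := ihk (by omega)
    have hxl := hx (i + (k + 1)) l (by omega) (by omega) hl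
    have hsign : (-1 : ℤ) ^ (i + (k + 1) + l) = -(-1) ^ k * (-1) ^ (i + l) := by
      rw [show i + (k + 1) + l = k + 1 + (i + l) by ring, pow_add, pow_succ]
      ring
    have hprod := (ihk1 (by omega)).mul hxl fun r => (hq r).units_zpow_left _
    rw [← Units.val_mul, ← zpow_add, hsign] at hprod
    rcases Nat.even_or_odd k with hk | hk
    · rw [hPodd (k + 1) i (by omega) hk.add_one hi (by omega), Nat.add_sub_cancel]
      simp only [hk, hk.neg_one_pow, Nat.even_add_one, not_true, not_false_eq_true, if_true,
        if_false] at hprod hPk ⊢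
      refine SkewCommute.mul_left hw (SkewCommute.sub ?_ hPk)
      simpa using hprod
    · rw [hPeven (k + 1) i (by omega) hk.add_one hi (by omega), Nat.add_sub_cancel]
      have hk' : ¬Even k := Nat.not_even_iff_odd.mpr hk
      simp only [hk', hk.neg_one_pow, Nat.even_add_one, not_true, not_false_eq_true, if_true,
        if_false] at hprod hPk ⊢
      refine SkewCommute.sub ?_ (SkewCommute.mul_left hw hPk)
      simpa using hprod

theorem reverse_even_step {R : Type*} [Ring R] {ν : Rˣ} (hν : ∀ r, Commute (ν : R) r)
    {y z D E : R} (hyz : y * z - 1 = (ν : R) ^ 2 * (z * y - 1))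
    (hD : SkewCommute ((ν : R) ^ 2) z D) (hE : Commute E z) :
    ↑ν⁻¹ * (D * y - E) * z - ↑ν⁻¹ * D = z * (↑ν⁻¹ * (D * y - E)) - ν * D := by
  have hqD : Commute ((ν : R) ^ 2) D := (hν D).pow_left 2
  have hzy : (ν : R) ^ 2 * (z * y) = y * z - 1 + (ν : R) ^ 2 := by
    rw [hyz]
    noncomm_ring
  have hzDy : z * (D * y) = D * y * z + ((ν : R) ^ 2 - 1) * D := by
    calc z * (D * y) = (ν : R) ^ 2 * D * z * y := by rw [← mul_assoc, hD]; noncomm_ring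
      _ = D * ((ν : R) ^ 2 * (z * y)) := by rw [hqD.eq]; noncomm_ring
      _ = D * y * z + ((ν : R) ^ 2 - 1) * D := by rw [hzy, sub_mul, hqD.eq]; noncomm_ring
  have hνinv : (ν : R) = ↑ν⁻¹ * ((ν : R) ^ 2) := by
    rw [pow_two, ← mul_assoc, Units.inv_mul, one_mul]
  calc ↑ν⁻¹ * (D * y - E) * z - ↑ν⁻¹ * D
      = ↑ν⁻¹ * (D * y * z - E * z) - ↑ν⁻¹ * D := by noncomm_ring
    _ = ↑ν⁻¹ * (z * (D * y - E)) - ↑ν⁻¹ * (ν : R) ^ 2 * D := by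
        rw [hE.eq, mul_sub z, hzDy]
        noncomm_ring
    _ = z * (↑ν⁻¹ * (D * y - E)) - ν * D := by
        rw [← hνinv, ((hν z).units_inv_left).left_comm]

theorem reversed_recursion_even_case_general
    (R : Type*) [Ring R] (n : ℕ)
    (ν : Rˣ) (hcen : ∀ r : R, (ν : R) * r = r * (ν : R))
    (x : ℕ → R)
    (hR1 : ∀ i, 1 ≤ i → i < n →
      x i * x (i + 1) - 1 = ((ν : R) ^ 2) * (x (i + 1) * x i - 1))
    (hR2 : ∀ i k, 1 ≤ i → 1 < k → i + k ≤ n →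
      x i * x (i + k) = (((ν ^ 2 : Rˣ) ^ ((-1 : ℤ) ^ (k - 1)) : Rˣ) : R) * (x (i + k) * x i))
    (P : ℕ → ℕ → R)
    (hP0 : ∀ i, P 0 i = 1)
    (hP1 : ∀ i, P 1 i = x i)
    (hPeven : ∀ m i, 1 ≤ m → Even m → 1 ≤ i → i + m ≤ n →
      P (m + 1) i = P m i * x (i + m) - ((ν⁻¹ : Rˣ) : R) * P (m - 1) i)
    (hPodd : ∀ m i, 1 ≤ m → Odd m → 1 ≤ i → i + m ≤ n →
      P (m + 1) i = ((ν⁻¹ : Rˣ) : R) * (P m i * x (i + m) - P (m - 1) i)) :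
    ∀ m i, 1 ≤ m → Even m → 1 ≤ i → i + m ≤ n →
      P (m + 1) i = x (i + m) * P m i - (ν : R) * P (m - 1) i := by
  intro m i hm hmev hi hin
  obtain ⟨k, rfl⟩ : ∃ k, m = k + 2 := by
    obtain ⟨t, rfl⟩ := hmev
    exact ⟨t + t - 2, by omega⟩
  have hk : Even k := by simpa [Nat.even_add] using hmev
  have hν : ∀ r, Commute (ν : R) r := hcen
  have hskew := continuant_skewCommute (fun r => (hν r).units_zpow_left 2)
    (fun r => (hν r).units_inv_left) (skewCommute_zpow_neg_neg_one_pow_add hR2)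
    hP0 hP1 hPeven hPodd hi hin
  have hD := hskew (k + 1) (by omega)
  have hE := hskew k (by omega)
  have hsum : Even (i + (i + (k + 2))) := by
    obtain ⟨t, rfl⟩ := hk
    exact ⟨i + t + 1, by omega⟩
  rw [if_neg (by simpa [Nat.even_add_one] using hk), hsum.neg_one_pow, zpow_neg_one] at hD
  rw [if_pos hk, zpow_zero, Units.val_one, SkewCommute.one_iff] at hE
  rw [hPeven (k + 2) i hm hmev hi hin, hPodd (k + 1) i (by omega) hk.add_one hi (by omega),
    Nat.add_sub_cancel]
  refine reverse_even_step hν (hR1 (i + (k + 1)) (by omega) (by omega)) ?_ hE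
  rw [← Units.val_pow_eq_pow_val]
  exact hD.symm_of_inv

theorem reversed_recursion_even_case
    (R : Type*) [Ring R] (n : ℕ) (hn : 1 ≤ n)
    (ν : Rˣ) (hcen : ∀ r : R, (ν : R) * r = r * (ν : R))
    (x : ℕ → R)
    (hR1 : ∀ i, 1 ≤ i → i < n →
      x i * x (i + 1) - 1 = ((ν : R) ^ 2) * (x (i + 1) * x i - 1))
    (hR2 : ∀ i k, 1 ≤ i → 1 < k → i + k ≤ n →
      x i * x (i + k) = (((ν ^ 2 : Rˣ) ^ ((-1 : ℤ) ^ (k - 1)) : Rˣ) : R) * (x (i + k) * x i))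
    (P : ℕ → ℕ → R)
    (hP0 : ∀ i, P 0 i = 1)
    (hP1 : ∀ i, P 1 i = x i)
    (hPeven : ∀ m i, 1 ≤ m → Even m → 1 ≤ i → i + m ≤ n →
      P (m + 1) i = P m i * x (i + m) - ((ν⁻¹ : Rˣ) : R) * P (m - 1) i)
    (hPodd : ∀ m i, 1 ≤ m → Odd m → 1 ≤ i → i + m ≤ n →
      P (m + 1) i = ((ν⁻¹ : Rˣ) : R) * (P m i * x (i + m) - P (m - 1) i)) :
    ∀ m i, 1 ≤ m → Even m → 1 ≤ i → i + m ≤ n →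
      P (m + 1) i = x (i + m) * P m i - (ν : R) * P (m - 1) i :=
  reversed_recursion_even_case_general R n ν hcen x hR1 hR2 P hP0 hP1 hPeven hPodd
end

section
/- Reversed recursion for quantum signed continuant polynomials, odd case: for every odd integer m ≥ 1 and every 1 ≤ i ≤ n − m, one has P_{m+1,i} = ν (x_{i+m} P_{m,i} − P_{m−1,i}). -/
/-!
Write `q = ν²`. By induction on `m`, the continuant `P_{m,i}` commutes with every later variable
`x_{i+k}` (`k > m`) up to the factor `q^{±1}` prescribed by (R2) when `m` is odd, and commutes with
it exactly when `m` is even: the three-term recursion preserves this because the exponents of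
`P_{m-1,i}` and of `P_{m,i} x_{i+m}` agree. For odd `m`, moving `x_{i+m}` across `P_{m,i}` in the
forward recursion then costs exactly a factor `q` (the case `m = 1` is (R1)), and `ν⁻¹ q = ν`.
-/

section TwistedCommute

variable {R : Type*} [Ring R]

def TwistedCommute (u : Rˣ) (e : ℤ) (a b : R) : Prop :=
  a * b = ((u ^ e : Rˣ) : R) * (b * a)

variable {u : Rˣ} {e f : ℤ} {a b c : R}

theorem twistedCommute_zero_iff : TwistedCommute u 0 a b ↔ Commute a b := by
  simp [TwistedCommute, Commute, SemiconjBy]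

theorem TwistedCommute.mul_left (hu : ∀ r : R, Commute (u : R) r)
    (ha : TwistedCommute u e a c) (hb : TwistedCommute u f b c) :
    TwistedCommute u (e + f) (a * b) c := by
  unfold TwistedCommute at *
  calc a * b * c = ((u ^ f : Rˣ) : R) * (a * c * b) := by
        rw [mul_assoc, hb, ((hu a).units_zpow_left f).symm.left_comm, mul_assoc]
    _ = ((u ^ (e + f) : Rˣ) : R) * (c * (a * b)) := by
        rw [ha, zpow_add, Units.val_mul]
        simp only [mul_assoc]
        exact ((hu _).units_zpow_left f).left_comm _

theorem TwistedCommute.sub_left (ha : TwistedCommute u e a c) (hb : TwistedCommute u e b c) :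
    TwistedCommute u e (a - b) c := by
  unfold TwistedCommute at *
  rw [sub_mul, ha, hb, ← mul_sub, ← mul_sub]

theorem TwistedCommute.central_mul_left {w : R} (hw : ∀ r : R, Commute w r)
    (ha : TwistedCommute u e a c) : TwistedCommute u e (w * a) c := by
  unfold TwistedCommute at *
  rw [mul_assoc, ha, (hw _).left_comm, (hw c).left_comm]

end TwistedCommute

/-- The exponent of `ν ^ 2` picked up when `x_{i+k}` is moved across `P_{m,i}`, for `m < k`. -/
def continuantTwist (m k : ℕ) : ℤ :=
  if Even m then 0 else (-1) ^ (k - 1)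

theorem continuantTwist_succ_add (t k : ℕ) (htk : t + 1 < k) :
    continuantTwist (t + 1) k + (-1) ^ (k - (t + 1) - 1) = continuantTwist t k := by
  have hsplit : (-1 : ℤ) ^ (k - 1) = (-1) ^ (k - (t + 1) - 1) * (-1) ^ (t + 1) := by
    rw [← pow_add]; congr 1; omega
  rcases Nat.even_or_odd t with ht | ht
  · simp [continuantTwist, ht, Nat.not_even_iff_odd.mpr ht.add_one, hsplit, ht.add_one.neg_one_pow]
  · simp [continuantTwist, ht.add_one, Nat.not_even_iff_odd.mpr ht, hsplit, ht.add_one.neg_one_pow]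

section Continuant

variable {R : Type*} [Ring R] {n : ℕ} {ν : Rˣ} {x : ℕ → R} {P : ℕ → ℕ → R}

theorem continuant_twistedCommute (hν : ∀ r : R, Commute (ν : R) r)
    (hR2 : ∀ i k, 1 ≤ i → 1 < k → i + k ≤ n →
      TwistedCommute (ν ^ 2) ((-1) ^ (k - 1)) (x i) (x (i + k)))
    (hP0 : ∀ i, P 0 i = 1) (hP1 : ∀ i, P 1 i = x i)
    (hPeven : ∀ m i, 1 ≤ m → Even m → 1 ≤ i → i + m ≤ n →
      P (m + 1) i = P m i * x (i + m) - ((ν⁻¹ : Rˣ) : R) * P (m - 1) i)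
    (hPodd : ∀ m i, 1 ≤ m → Odd m → 1 ≤ i → i + m ≤ n →
      P (m + 1) i = ((ν⁻¹ : Rˣ) : R) * (P m i * x (i + m) - P (m - 1) i))
    {i k : ℕ} (hi : 1 ≤ i) (hk : i + k ≤ n) (m : ℕ) (hmk : m < k) :
    TwistedCommute (ν ^ 2) (continuantTwist m k) (P m i) (x (i + k)) := by
  have hq : ∀ r : R, Commute ((ν ^ 2 : Rˣ) : R) r := fun r => by
    rw [Units.val_pow_eq_pow_val]; exact (hν r).pow_left 2
  have hw : ∀ r : R, Commute ((ν⁻¹ : Rˣ) : R) r := fun r => (hν r).units_inv_left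
  induction m using Nat.twoStepInduction with
  | zero =>
    simp [continuantTwist, hP0, twistedCommute_zero_iff]
  | one =>
    simpa [continuantTwist, hP1] using hR2 i k hi (by omega) hk
  | more t ih₀ ih₁ =>
    have hY : TwistedCommute (ν ^ 2) ((-1) ^ (k - (t + 1) - 1)) (x (i + (t + 1))) (x (i + k)) := by
      have h := hR2 (i + (t + 1)) (k - (t + 1)) (by omega) (by omega) (by omega)
      rwa [show i + (t + 1) + (k - (t + 1)) = i + k by omega] at h
    have hAY := (ih₁ (by omega)).mul_left hq hY
    rw [continuantTwist_succ_add t k (by omega)] at hAY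
    have hB := ih₀ (by omega)
    have hexp : continuantTwist (t + 2) k = continuantTwist t k := by
      simp [continuantTwist, Nat.even_add]
    rw [hexp]
    rcases Nat.even_or_odd t with ht | ht
    · rw [hPodd (t + 1) i (by omega) ht.add_one hi (by omega), Nat.add_sub_cancel]
      exact (hAY.sub_left hB).central_mul_left hw
    · rw [hPeven (t + 1) i (by omega) ht.add_one hi (by omega), Nat.add_sub_cancel]
      exact hAY.sub_left (hB.central_mul_left hw)

theorem continuant_mul_sub_eq (hν : ∀ r : R, Commute (ν : R) r)
    (hR1 : ∀ i, 1 ≤ i → i < n →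
      x i * x (i + 1) - 1 = ((ν : R) ^ 2) * (x (i + 1) * x i - 1))
    (hR2 : ∀ i k, 1 ≤ i → 1 < k → i + k ≤ n →
      TwistedCommute (ν ^ 2) ((-1) ^ (k - 1)) (x i) (x (i + k)))
    (hP0 : ∀ i, P 0 i = 1) (hP1 : ∀ i, P 1 i = x i)
    (hPeven : ∀ m i, 1 ≤ m → Even m → 1 ≤ i → i + m ≤ n →
      P (m + 1) i = P m i * x (i + m) - ((ν⁻¹ : Rˣ) : R) * P (m - 1) i)
    (hPodd : ∀ m i, 1 ≤ m → Odd m → 1 ≤ i → i + m ≤ n →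
      P (m + 1) i = ((ν⁻¹ : Rˣ) : R) * (P m i * x (i + m) - P (m - 1) i))
    {m i : ℕ} (hm : Odd m) (hi : 1 ≤ i) (him : i + m ≤ n) :
    P m i * x (i + m) - P (m - 1) i = (ν : R) ^ 2 * (x (i + m) * P m i - P (m - 1) i) := by
  rcases Nat.lt_or_ge m 2 with hm2 | hm2
  · obtain rfl : m = 1 := by rcases hm with ⟨r, rfl⟩; omega
    simpa [hP0, hP1] using hR1 i hi (by omega)
  obtain ⟨t, rfl⟩ := Nat.exists_eq_add_of_le' hm2
  have ht : Odd t := by simpa [Nat.odd_add] using hm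
  have hcomm := continuant_twistedCommute hν hR2 hP0 hP1 hPeven hPodd hi him
  have hA : Commute (P (t + 1) i) (x (i + (t + 2))) := by
    simpa [continuantTwist, ht.add_one, twistedCommute_zero_iff] using hcomm (t + 1) (by omega)
  have hB : P t i * x (i + (t + 2)) = (ν : R) ^ 2 * (x (i + (t + 2)) * P t i) := by
    simpa [TwistedCommute, continuantTwist, Nat.not_even_iff_odd.mpr ht, ht.add_one.neg_one_pow]
      using hcomm t (by omega)
  have hYX := hR1 (i + (t + 1)) (by omega) (by omega)
  rw [show i + (t + 1) + 1 = i + (t + 2) by omega] at hYX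
  rw [show t + 2 - 1 = t + 1 by omega, hPeven (t + 1) i (by omega) ht.add_one hi (by omega),
    Nat.add_sub_cancel]
  set q : R := (ν : R) ^ 2
  set w : R := ((ν⁻¹ : Rˣ) : R)
  set A := P (t + 1) i
  set B := P t i
  set X := x (i + (t + 2))
  set Y := x (i + (t + 1))
  have hq : ∀ r : R, Commute q r := fun r => (hν r).pow_left 2
  have hw : ∀ r : R, Commute w r := fun r => (hν r).units_inv_left
  calc (A * Y - w * B) * X - A = A * (q * (X * Y - 1)) - w * (q * (X * B)) := by
        rw [← hYX, ← hB]; noncomm_ring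
    _ = q * (A * X * Y - A - w * (X * B)) := by
        rw [(hq A).symm.left_comm, (hq w).symm.left_comm]; noncomm_ring
    _ = q * (X * A * Y - A - X * (w * B)) := by rw [hA.eq, (hw X).left_comm]
    _ = q * (X * (A * Y - w * B) - A) := by noncomm_ring

end Continuant

theorem reversed_recursion_odd_case_general
    (R : Type*) [Ring R] (n : ℕ)
    (ν : Rˣ) (hcen : ∀ r : R, (ν : R) * r = r * (ν : R))
    (x : ℕ → R)
    (hR1 : ∀ i, 1 ≤ i → i < n →
      x i * x (i + 1) - 1 = ((ν : R) ^ 2) * (x (i + 1) * x i - 1))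
    (hR2 : ∀ i k, 1 ≤ i → 1 < k → i + k ≤ n →
      x i * x (i + k) = (((ν ^ 2 : Rˣ) ^ ((-1 : ℤ) ^ (k - 1)) : Rˣ) : R) * (x (i + k) * x i))
    (P : ℕ → ℕ → R)
    (hP0 : ∀ i, P 0 i = 1)
    (hP1 : ∀ i, P 1 i = x i)
    (hPeven : ∀ m i, 1 ≤ m → Even m → 1 ≤ i → i + m ≤ n →
      P (m + 1) i = P m i * x (i + m) - ((ν⁻¹ : Rˣ) : R) * P (m - 1) i)
    (hPodd : ∀ m i, 1 ≤ m → Odd m → 1 ≤ i → i + m ≤ n →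
      P (m + 1) i = ((ν⁻¹ : Rˣ) : R) * (P m i * x (i + m) - P (m - 1) i)) :
    ∀ m i, 1 ≤ m → Odd m → 1 ≤ i → i + m ≤ n →
      P (m + 1) i = (ν : R) * (x (i + m) * P m i - P (m - 1) i) := by
  intro m i hm hodd hi him
  rw [hPodd m i hm hodd hi him,
    continuant_mul_sub_eq hcen hR1 hR2 hP0 hP1 hPeven hPodd hodd hi him,
    sq, mul_assoc, Units.inv_mul_cancel_left]

theorem reversed_recursion_odd_case
    (R : Type*) [Ring R] (n : ℕ) (hn : 1 ≤ n)
    (ν : Rˣ) (hcen : ∀ r : R, (ν : R) * r = r * (ν : R))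
    (x : ℕ → R)
    (hR1 : ∀ i, 1 ≤ i → i < n →
      x i * x (i + 1) - 1 = ((ν : R) ^ 2) * (x (i + 1) * x i - 1))
    (hR2 : ∀ i k, 1 ≤ i → 1 < k → i + k ≤ n →
      x i * x (i + k) = (((ν ^ 2 : Rˣ) ^ ((-1 : ℤ) ^ (k - 1)) : Rˣ) : R) * (x (i + k) * x i))
    (P : ℕ → ℕ → R)
    (hP0 : ∀ i, P 0 i = 1)
    (hP1 : ∀ i, P 1 i = x i)
    (hPeven : ∀ m i, 1 ≤ m → Even m → 1 ≤ i → i + m ≤ n →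
      P (m + 1) i = P m i * x (i + m) - ((ν⁻¹ : Rˣ) : R) * P (m - 1) i)
    (hPodd : ∀ m i, 1 ≤ m → Odd m → 1 ≤ i → i + m ≤ n →
      P (m + 1) i = ((ν⁻¹ : Rˣ) : R) * (P m i * x (i + m) - P (m - 1) i)) :
    ∀ m i, 1 ≤ m → Odd m → 1 ≤ i → i + m ≤ n →
      P (m + 1) i = (ν : R) * (x (i + m) * P m i - P (m - 1) i) :=
  reversed_recursion_odd_case_general R n ν hcen x hR1 hR2 P hP0 hP1 hPeven hPodd
end

section
/- Commutation of quantum signed continuant polynomials with distant variables, odd case: for every odd integer m ≥ 1, every integer k > 1 and every i ≥ 1 with i + m − 1 + k ≤ n, one has P_{m,i} x_{i+m−1+k} = q^{(−1)^{k−1}} x_{i+m−1+k} P_{m,i}. -/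
/-!
`ScaledCommute c a b`, with `c` central, is multiplicative in `a` (the scalars multiply) and
additive in `a` for a fixed scalar. By (R2) each variable `x_i, …, x_{i+m-1}` of `P_{m,i}`
scaled-commutes with a distant `x_j` with factor `q^{±1}`, the sign alternating with the distance.
Induction in steps of two then shows that `P_{2m,i}` commutes with every `x_j` beyond `x_{i+2m}`,
while `P_{2m+1,i}` picks up exactly the factor of its last variable: in the even step the factors
of `P_{2m+1,i}` and `x_{i+2m+1}` are inverse to each other, in the odd step those of `x_{i+2m+2}`
and `P_{2m+1,i}` coincide.
-/

def ScaledCommute {R : Type*} [Mul R] (c a b : R) : Prop :=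
  a * b = c * (b * a)

namespace ScaledCommute

variable {R : Type*} [Ring R] {a b z c d s : R}

theorem of_commute (h : Commute a z) : ScaledCommute 1 a z := by
  rw [ScaledCommute, one_mul]; exact h

theorem commute (h : ScaledCommute 1 a z) : Commute a z := by
  rw [ScaledCommute, one_mul] at h; exact h

theorem mul_left (hd : ∀ r, Commute d r) (ha : ScaledCommute c a z) (hb : ScaledCommute d b z) :
    ScaledCommute (c * d) (a * b) z := by
  unfold ScaledCommute at *
  rw [mul_assoc, hb, ← (hd a).left_comm, ← mul_assoc a, ha, ← (hd c).eq]
  simp only [mul_assoc]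

theorem central_mul_left (hs : ∀ r, Commute s r) (ha : ScaledCommute c a z) :
    ScaledCommute c (s * a) z := by
  unfold ScaledCommute at *
  rw [mul_assoc, ha, (hs c).left_comm, ← mul_assoc z, ← (hs z).eq, mul_assoc]

theorem sub_left (ha : ScaledCommute c a z) (hb : ScaledCommute c b z) :
    ScaledCommute c (a - b) z := by
  unfold ScaledCommute at *
  rw [sub_mul, ha, hb, mul_sub, mul_sub]

theorem commute_central_mul_sub {y : R} (hs : ∀ r, Commute s r) (hd : ∀ r, Commute d r)
    (hcd : c * d = 1) (ha : ScaledCommute c a z) (hy : ScaledCommute d y z) (hb : Commute b z) :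
    Commute (s * (a * y - b)) z := by
  have hay := ha.mul_left hd hy
  rw [hcd] at hay
  exact (hs z).mul_left (hay.commute.sub_left hb)

theorem mul_sub_central_mul {y : R} (hs : ∀ r, Commute s r) (hc : ∀ r, Commute c r)
    (ha : Commute a z) (hy : ScaledCommute c y z) (hb : ScaledCommute c b z) :
    ScaledCommute c (a * y - s * b) z := by
  have hay := (of_commute ha).mul_left hc hy
  rw [one_mul] at hay
  exact hay.sub_left (hb.central_mul_left hs)

end ScaledCommute

theorem neg_one_pow_add_two_sub_one {k : ℕ} (hk : 1 ≤ k) :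
    (-1 : ℤ) ^ (k + 2 - 1) = (-1) ^ (k - 1) := by
  rw [show k + 2 - 1 = k - 1 + 2 by omega, pow_add]
  norm_num

theorem continuant_commute_distant_variable {R : Type*} [Ring R] (n : ℕ) (u : Rˣ) (s : R)
    (hu : ∀ r, Commute (u : R) r) (hs : ∀ r, Commute s r) (x : ℕ → R)
    (hx : ∀ i k, 1 ≤ i → 1 < k → i + k ≤ n →
      ScaledCommute ((u ^ (-1 : ℤ) ^ (k - 1) : Rˣ) : R) (x i) (x (i + k)))
    (P : ℕ → ℕ → R) (hP0 : ∀ i, P 0 i = 1) (hP1 : ∀ i, P 1 i = x i)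
    (hPeven : ∀ m i, 1 ≤ m → Even m → 1 ≤ i → i + m ≤ n →
      P (m + 1) i = P m i * x (i + m) - s * P (m - 1) i)
    (hPodd : ∀ m i, 1 ≤ m → Odd m → 1 ≤ i → i + m ≤ n →
      P (m + 1) i = s * (P m i * x (i + m) - P (m - 1) i))
    (m : ℕ) :
    (∀ i k, 1 ≤ i → 0 < k → i + 2 * m + k ≤ n →
      Commute (P (2 * m) i) (x (i + 2 * m + k))) ∧
    (∀ i k, 1 ≤ i → 1 < k → i + 2 * m + k ≤ n →
      ScaledCommute ((u ^ (-1 : ℤ) ^ (k - 1) : Rˣ) : R) (P (2 * m + 1) i)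
        (x (i + 2 * m + k))) := by
  have hcentral : ∀ e : ℤ, ∀ r, Commute ((u ^ e : Rˣ) : R) r := fun e r =>
    (hu r).units_zpow_left e
  induction m with
  | zero =>
    refine ⟨fun i k _ _ _ => by simp [hP0], fun i k hi hk hn => ?_⟩
    simpa [hP1] using hx i k hi hk (by omega)
  | succ m ih =>
    obtain ⟨ihEven, ihOdd⟩ := ih
    have hEvenSucc : ∀ i k, 1 ≤ i → 0 < k → i + 2 * (m + 1) + k ≤ n →
        Commute (P (2 * (m + 1)) i) (x (i + 2 * (m + 1) + k)) := by
      intro i k hi hk hn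
      have hrec := hPodd (2 * m + 1) i (by omega) (odd_two_mul_add_one m) hi (by omega)
      have hodd := ihOdd i (k + 2) hi (by omega) (by omega)
      have hlast : ScaledCommute ((u ^ (-1 : ℤ) ^ k : Rˣ) : R) (x (i + 2 * m + 1))
          (x (i + 2 * m + (k + 2))) := by
        simpa [show i + 2 * m + 1 + (k + 1) = i + 2 * m + (k + 2) by ring]
          using hx (i + 2 * m + 1) (k + 1) (by omega) (by omega) (by omega)
      have heven := ihEven i (k + 2) hi (by omega) (by omega)
      have hinv :
          ((u ^ (-1 : ℤ) ^ (k + 2 - 1) : Rˣ) : R) * ((u ^ (-1 : ℤ) ^ k : Rˣ) : R) = 1 := by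
        rw [← Units.val_mul, ← zpow_add, show k + 2 - 1 = k + 1 by omega, pow_succ]
        simp
      rw [show i + 2 * (m + 1) + k = i + 2 * m + (k + 2) by ring,
        show 2 * (m + 1) = 2 * m + 1 + 1 by ring, hrec, Nat.add_sub_cancel, ← add_assoc]
      exact ScaledCommute.commute_central_mul_sub hs (hcentral _) hinv hodd hlast heven
    refine ⟨hEvenSucc, fun i k hi hk hn => ?_⟩
    have hrec := hPeven (2 * (m + 1)) i (by omega) (even_two_mul _) hi (by omega)
    have heven := hEvenSucc i k hi (by omega) hn
    have hlast := hx (i + 2 * (m + 1)) k (by omega) hk hn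
    have hodd : ScaledCommute ((u ^ (-1 : ℤ) ^ (k - 1) : Rˣ) : R) (P (2 * m + 1) i)
        (x (i + 2 * (m + 1) + k)) := by
      rw [← neg_one_pow_add_two_sub_one (by omega : 1 ≤ k),
        show i + 2 * (m + 1) + k = i + 2 * m + (k + 2) by ring]
      exact ihOdd i (k + 2) hi (by omega) (by omega)
    rw [hrec, show 2 * (m + 1) - 1 = 2 * m + 1 by omega]
    exact ScaledCommute.mul_sub_central_mul hs (hcentral _) heven hlast hodd

theorem commutation_with_distant_variables_odd_case_general
    (R : Type*) [Ring R] (n : ℕ)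
    (ν : Rˣ) (hcen : ∀ r : R, (ν : R) * r = r * (ν : R))
    (x : ℕ → R)
    (hR2 : ∀ i k, 1 ≤ i → 1 < k → i + k ≤ n →
      x i * x (i + k) = (((ν ^ 2 : Rˣ) ^ ((-1 : ℤ) ^ (k - 1)) : Rˣ) : R) * (x (i + k) * x i))
    (P : ℕ → ℕ → R)
    (hP0 : ∀ i, P 0 i = 1)
    (hP1 : ∀ i, P 1 i = x i)
    (hPeven : ∀ m i, 1 ≤ m → Even m → 1 ≤ i → i + m ≤ n →
      P (m + 1) i = P m i * x (i + m) - ((ν⁻¹ : Rˣ) : R) * P (m - 1) i)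
    (hPodd : ∀ m i, 1 ≤ m → Odd m → 1 ≤ i → i + m ≤ n →
      P (m + 1) i = ((ν⁻¹ : Rˣ) : R) * (P m i * x (i + m) - P (m - 1) i)) :
    ∀ m k i, 1 ≤ m → Odd m → 1 < k → 1 ≤ i → i + m - 1 + k ≤ n →
      P m i * x (i + m - 1 + k) =
        (((ν ^ 2 : Rˣ) ^ ((-1 : ℤ) ^ (k - 1)) : Rˣ) : R) * (x (i + m - 1 + k) * P m i) := by
  have hq : ∀ r, Commute ((ν ^ 2 : Rˣ) : R) r := fun r => by
    simpa using (Commute.pow_left (hcen r) 2)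
  have hνinv : ∀ r, Commute ((ν⁻¹ : Rˣ) : R) r := fun r => Commute.units_inv_left (hcen r)
  rintro m k i - ⟨m, rfl⟩ hk hi hle
  rw [show i + (2 * m + 1) - 1 + k = i + 2 * m + k by omega] at hle ⊢
  exact (continuant_commute_distant_variable n (ν ^ 2) _ hq hνinv x hR2 P hP0 hP1 hPeven hPodd
    m).2 i k hi hk hle

theorem commutation_with_distant_variables_odd_case
    (R : Type*) [Ring R] (n : ℕ) (hn : 1 ≤ n)
    (ν : Rˣ) (hcen : ∀ r : R, (ν : R) * r = r * (ν : R))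
    (x : ℕ → R)
    (hR1 : ∀ i, 1 ≤ i → i < n →
      x i * x (i + 1) - 1 = ((ν : R) ^ 2) * (x (i + 1) * x i - 1))
    (hR2 : ∀ i k, 1 ≤ i → 1 < k → i + k ≤ n →
      x i * x (i + k) = (((ν ^ 2 : Rˣ) ^ ((-1 : ℤ) ^ (k - 1)) : Rˣ) : R) * (x (i + k) * x i))
    (P : ℕ → ℕ → R)
    (hP0 : ∀ i, P 0 i = 1)
    (hP1 : ∀ i, P 1 i = x i)
    (hPeven : ∀ m i, 1 ≤ m → Even m → 1 ≤ i → i + m ≤ n →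
      P (m + 1) i = P m i * x (i + m) - ((ν⁻¹ : Rˣ) : R) * P (m - 1) i)
    (hPodd : ∀ m i, 1 ≤ m → Odd m → 1 ≤ i → i + m ≤ n →
      P (m + 1) i = ((ν⁻¹ : Rˣ) : R) * (P m i * x (i + m) - P (m - 1) i)) :
    ∀ m k i, 1 ≤ m → Odd m → 1 < k → 1 ≤ i → i + m - 1 + k ≤ n →
      P m i * x (i + m - 1 + k) =
        (((ν ^ 2 : Rˣ) ^ ((-1 : ℤ) ^ (k - 1)) : Rˣ) : R) * (x (i + m - 1 + k) * P m i) :=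
  commutation_with_distant_variables_odd_case_general R n ν hcen x hR2 P hP0 hP1 hPeven hPodd
end

section
/- Commutation of quantum signed continuant polynomials with distant variables, even case: for every even integer m ≥ 2, every integer k > 1 and every i ≥ 1 with i + m − 1 + k ≤ n, one has P_{m,i} x_{i+m−1+k} = x_{i+m−1+k} P_{m,i}. -/
/-!
Let `twist q k = q ^ ((-1) ^ (k - 1))` be the scalar of relation (R2); for `k ≥ 1` it satisfies
`twist q k * twist q (k + 1) = 1` and `twist q (k + 2) = twist q k`. By a two-step induction
on `m`, `P_{m,i}` commutes with `y = x_{i+m-1+k}` when `m` is even, and commutes with it up to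
the factor `twist q k` when `m` is odd. In the recursion for `P_{m+2,i}`, the product
`P_{m+1,i} x_{i+m+1}` picks up `twist q (k + 1)` from `P_{m+1,i}` (if `m + 1` is odd) and
`twist q k` from `x_{i+m+1}`, which cancel; or only `twist q k` (if `m + 1` is even), matching
the factor `twist q (k + 2) = twist q k` of `P_{m,i}`.
-/

def TwistCommute {R : Type*} [Mul R] (c a b : R) : Prop := a * b = c * (b * a)

theorem twistCommute_one_iff {M : Type*} [Monoid M] {a b : M} :
    TwistCommute 1 a b ↔ Commute a b := by
  rw [TwistCommute, one_mul]; rfl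

theorem TwistCommute.mul_left {M : Type*} [Monoid M] {c₁ c₂ a₁ a₂ b : M}
    (h₁ : TwistCommute c₁ a₁ b) (h₂ : TwistCommute c₂ a₂ b) (hc : Commute c₂ a₁) :
    TwistCommute (c₂ * c₁) (a₁ * a₂) b := by
  unfold TwistCommute at *
  calc a₁ * a₂ * b = c₂ * (a₁ * b) * a₂ := by
        rw [mul_assoc, h₂, ← mul_assoc, ← hc.eq]; simp only [mul_assoc]
    _ = c₂ * c₁ * (b * (a₁ * a₂)) := by rw [h₁]; simp only [mul_assoc]

theorem TwistCommute.sub_left {R : Type*} [Ring R] {c a₁ a₂ b : R}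
    (h₁ : TwistCommute c a₁ b) (h₂ : TwistCommute c a₂ b) :
    TwistCommute c (a₁ - a₂) b := by
  unfold TwistCommute at *
  rw [sub_mul, h₁, h₂, mul_sub, mul_sub]

section Twist

variable {M : Type*} [Monoid M]

def twist (q : Mˣ) (k : ℕ) : Mˣ := q ^ ((-1 : ℤ) ^ (k - 1))

theorem twist_mul_twist_add_one (q : Mˣ) {k : ℕ} (hk : 1 ≤ k) :
    twist q k * twist q (k + 1) = 1 := by
  rw [twist, twist, ← zpow_add, show k + 1 - 1 = k - 1 + 1 by omega, pow_succ]; simp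

theorem twist_add_two (q : Mˣ) {k : ℕ} (hk : 1 ≤ k) : twist q (k + 2) = twist q k := by
  rw [twist, twist, show k + 2 - 1 = k - 1 + 2 by omega, pow_add]; simp

theorem commute_twist {q : Mˣ} {r : M} (hq : Commute (q : M) r) (k : ℕ) :
    Commute (twist q k : M) r :=
  hq.units_zpow_left _

end Twist

section Continuant

def DistantTwistCommute {R : Type*} [Mul R] (n : ℕ) (x : ℕ → R) (P : ℕ → ℕ → R) (c : ℕ → R)
    (m : ℕ) : Prop :=
  ∀ k i, 1 < k → 1 ≤ i → i + m - 1 + k ≤ n →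
    TwistCommute (c k) (P m i) (x (i + m - 1 + k))

variable {R : Type*} [Ring R] {n : ℕ} {u : R} {q : Rˣ} {x : ℕ → R} {P : ℕ → ℕ → R}

theorem DistantTwistCommute.even_add_two
    (hu : ∀ r, Commute u r) (hq : ∀ r, Commute (q : R) r)
    (hR2 : ∀ i k, 1 ≤ i → 1 < k → i + k ≤ n →
      TwistCommute (twist q k : R) (x i) (x (i + k)))
    (hPodd : ∀ m i, 1 ≤ m → Odd m → 1 ≤ i → i + m ≤ n →
      P (m + 1) i = u * (P m i * x (i + m) - P (m - 1) i))
    {m : ℕ} (hm : Even m) (h₀ : DistantTwistCommute n x P (fun _ ↦ 1) m)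
    (h₁ : DistantTwistCommute n x P (fun k ↦ twist q k) (m + 1)) :
    DistantTwistCommute n x P (fun _ ↦ 1) (m + 2) := by
  intro k i hk hi hle
  dsimp only
  have hrec : P (m + 2) i = u * (P (m + 1) i * x (i + (m + 1)) - P m i) :=
    hPodd (m + 1) i (by omega) hm.add_one hi (by omega)
  rw [show i + (m + 2) - 1 + k = i + (m + 1) + k by omega, hrec]
  have hP₁ := h₁ (k + 1) i (by omega) hi (by omega)
  have hP₀ := h₀ (k + 2) i (by omega) hi (by omega)
  rw [show i + (m + 1) - 1 + (k + 1) = i + (m + 1) + k by omega] at hP₁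
  rw [show i + m - 1 + (k + 2) = i + (m + 1) + k by omega] at hP₀
  have hx := hR2 (i + (m + 1)) k (by omega) hk (by omega)
  have hprod := hP₁.mul_left hx (commute_twist (hq _) k)
  rw [← Units.val_mul, twist_mul_twist_add_one _ (by omega), Units.val_one] at hprod
  rw [twistCommute_one_iff] at hprod hP₀ ⊢
  exact (hu _).mul_left (hprod.sub_left hP₀)

theorem DistantTwistCommute.odd_add_two
    (hu : ∀ r, Commute u r) (hq : ∀ r, Commute (q : R) r)
    (hR2 : ∀ i k, 1 ≤ i → 1 < k → i + k ≤ n →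
      TwistCommute (twist q k : R) (x i) (x (i + k)))
    (hPeven : ∀ m i, 1 ≤ m → Even m → 1 ≤ i → i + m ≤ n →
      P (m + 1) i = P m i * x (i + m) - u * P (m - 1) i)
    {m : ℕ} (hm : Odd m) (h₀ : DistantTwistCommute n x P (fun k ↦ twist q k) m)
    (h₁ : DistantTwistCommute n x P (fun _ ↦ 1) (m + 1)) :
    DistantTwistCommute n x P (fun k ↦ twist q k) (m + 2) := by
  intro k i hk hi hle
  dsimp only
  have hrec : P (m + 2) i = P (m + 1) i * x (i + (m + 1)) - u * P m i :=
    hPeven (m + 1) i (by omega) hm.add_one hi (by omega)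
  rw [show i + (m + 2) - 1 + k = i + (m + 1) + k by omega, hrec]
  have hP₁ := h₁ (k + 1) i (by omega) hi (by omega)
  have hP₀ := h₀ (k + 2) i (by omega) hi (by omega)
  rw [show i + (m + 1) - 1 + (k + 1) = i + (m + 1) + k by omega] at hP₁
  rw [show i + m - 1 + (k + 2) = i + (m + 1) + k by omega] at hP₀
  simp only [twist_add_two _ (show 1 ≤ k by omega)] at hP₀
  have hx := hR2 (i + (m + 1)) k (by omega) hk (by omega)
  have hprod := hP₁.mul_left hx (commute_twist (hq _) k)
  have hscaled := (twistCommute_one_iff.2 (hu _)).mul_left hP₀ (commute_twist (hq _) k)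
  rw [mul_one] at hprod hscaled
  exact hprod.sub_left hscaled

theorem distantTwistCommute_continuant
    (hu : ∀ r, Commute u r) (hq : ∀ r, Commute (q : R) r)
    (hR2 : ∀ i k, 1 ≤ i → 1 < k → i + k ≤ n →
      TwistCommute (twist q k : R) (x i) (x (i + k)))
    (hP0 : ∀ i, P 0 i = 1) (hP1 : ∀ i, P 1 i = x i)
    (hPeven : ∀ m i, 1 ≤ m → Even m → 1 ≤ i → i + m ≤ n →
      P (m + 1) i = P m i * x (i + m) - u * P (m - 1) i)
    (hPodd : ∀ m i, 1 ≤ m → Odd m → 1 ≤ i → i + m ≤ n →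
      P (m + 1) i = u * (P m i * x (i + m) - P (m - 1) i)) (m : ℕ) :
    DistantTwistCommute n x P (fun _ ↦ 1) (2 * m) ∧
      DistantTwistCommute n x P (fun k ↦ twist q k) (2 * m + 1) := by
  induction m with
  | zero =>
    refine ⟨fun k i _ _ _ ↦ ?_, fun k i hk hi _ ↦ ?_⟩
    · rw [hP0, twistCommute_one_iff]; exact Commute.one_left _
    · simpa [hP1] using hR2 i k hi hk (by omega)
  | succ m ih =>
    have h₂ := ih.1.even_add_two hu hq hR2 hPodd (even_two_mul m) ih.2
    exact ⟨h₂, ih.2.odd_add_two hu hq hR2 hPeven (odd_two_mul_add_one m) h₂⟩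

end Continuant

theorem commutation_with_distant_variables_even_case_general
    (R : Type*) [Ring R] (n : ℕ)
    (ν : Rˣ) (hcen : ∀ r : R, (ν : R) * r = r * (ν : R))
    (x : ℕ → R)
    (hR2 : ∀ i k, 1 ≤ i → 1 < k → i + k ≤ n →
      x i * x (i + k) = (((ν ^ 2 : Rˣ) ^ ((-1 : ℤ) ^ (k - 1)) : Rˣ) : R) * (x (i + k) * x i))
    (P : ℕ → ℕ → R)
    (hP0 : ∀ i, P 0 i = 1)
    (hP1 : ∀ i, P 1 i = x i)
    (hPeven : ∀ m i, 1 ≤ m → Even m → 1 ≤ i → i + m ≤ n →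
      P (m + 1) i = P m i * x (i + m) - ((ν⁻¹ : Rˣ) : R) * P (m - 1) i)
    (hPodd : ∀ m i, 1 ≤ m → Odd m → 1 ≤ i → i + m ≤ n →
      P (m + 1) i = ((ν⁻¹ : Rˣ) : R) * (P m i * x (i + m) - P (m - 1) i)) :
    ∀ m k i, 2 ≤ m → Even m → 1 < k → 1 ≤ i → i + m - 1 + k ≤ n →
      P m i * x (i + m - 1 + k) = x (i + m - 1 + k) * P m i := by
  intro m k i _ hm hk hi hle
  have hinv : ∀ r, Commute ((ν⁻¹ : Rˣ) : R) r := fun r ↦ Commute.units_inv_left (hcen r)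
  have hsq : ∀ r, Commute ((ν ^ 2 : Rˣ) : R) r := fun r ↦ by
    rw [Units.val_pow_eq_pow_val]; exact Commute.pow_left (hcen r) 2
  obtain ⟨t, rfl⟩ := hm.two_dvd
  exact twistCommute_one_iff.1 <|
    (distantTwistCommute_continuant hinv hsq hR2 hP0 hP1 hPeven hPodd t).1 k i hk hi hle

theorem commutation_with_distant_variables_even_case
    (R : Type*) [Ring R] (n : ℕ) (hn : 1 ≤ n)
    (ν : Rˣ) (hcen : ∀ r : R, (ν : R) * r = r * (ν : R))
    (x : ℕ → R)
    (hR1 : ∀ i, 1 ≤ i → i < n →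
      x i * x (i + 1) - 1 = ((ν : R) ^ 2) * (x (i + 1) * x i - 1))
    (hR2 : ∀ i k, 1 ≤ i → 1 < k → i + k ≤ n →
      x i * x (i + k) = (((ν ^ 2 : Rˣ) ^ ((-1 : ℤ) ^ (k - 1)) : Rˣ) : R) * (x (i + k) * x i))
    (P : ℕ → ℕ → R)
    (hP0 : ∀ i, P 0 i = 1)
    (hP1 : ∀ i, P 1 i = x i)
    (hPeven : ∀ m i, 1 ≤ m → Even m → 1 ≤ i → i + m ≤ n →
      P (m + 1) i = P m i * x (i + m) - ((ν⁻¹ : Rˣ) : R) * P (m - 1) i)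
    (hPodd : ∀ m i, 1 ≤ m → Odd m → 1 ≤ i → i + m ≤ n →
      P (m + 1) i = ((ν⁻¹ : Rˣ) : R) * (P m i * x (i + m) - P (m - 1) i)) :
    ∀ m k i, 2 ≤ m → Even m → 1 < k → 1 ≤ i → i + m - 1 + k ≤ n →
      P m i * x (i + m - 1 + k) = x (i + m - 1 + k) * P m i :=
  commutation_with_distant_variables_even_case_general R n ν hcen x hR2 P hP0 hP1 hPeven hPodd
end

section
/- Adjacent one-step mutated quantum cluster variables quasi-commute: for every 1 ≤ i < n, one has X'_i X'_{i+1} − 1 = q (X'_{i+1} X'_i − 1). -/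
/-!
Write `X'ⱼ = aⱼ + bⱼ` with `aⱼ = X^(-eⱼ + eⱼ₋₁)` and `bⱼ = X^(-eⱼ + eⱼ₊₁)`. For adjacent indices
`bᵢ` and `aᵢ₊₁` are mutually inverse, and each of the three other pairs `(aᵢ, aᵢ₊₁)`,
`(aᵢ, bᵢ₊₁)`, `(bᵢ, bᵢ₊₁)` `q`-commutes, the exponent being a value of the bilinear form of `Λ`
that equals `1` in all three cases. Expanding `X'ᵢ X'ᵢ₊₁` and `X'ᵢ₊₁ X'ᵢ`, the cross terms
`bᵢ aᵢ₊₁ = aᵢ₊₁ bᵢ = 1` account for the `-1` and the remaining terms differ by the factor `q`.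
-/

/-- The skew-symmetric matrix `Λ` (indexed by `1, …, n`) compatible with the incidence
matrix of the linearly oriented type `A` Dynkin quiver: `Λ i j = 1` if `i` is odd, `j` is
even and `i < j`; `Λ i j = -1` if `i` is even, `j` is odd and `i > j`; `Λ i j = 0`
otherwise. -/
def lamA (i j : ℕ) : ℤ :=
  if Odd i ∧ Even j ∧ i < j then 1
  else if Even i ∧ Odd j ∧ j < i then -1
  else 0

lemma lamA_eq_ite_mod (i j : ℕ) : lamA i j =
    if i % 2 = 1 ∧ j % 2 = 0 ∧ i < j then 1
    else if i % 2 = 0 ∧ j % 2 = 1 ∧ j < i then -1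
    else 0 := by
  simp [lamA, Nat.odd_iff, Nat.even_iff]

lemma lamA_swap (i j : ℕ) : lamA j i = -lamA i j := by
  simp only [lamA_eq_ite_mod]; split_ifs <;> omega

lemma lamA_eq_zero_off_Icc {n s t : ℕ} (hn : Even n) (hs : s ≤ n + 1) (ht : t ≤ n + 1)
    (h : ¬ (1 ≤ s ∧ s ≤ n ∧ 1 ≤ t ∧ t ≤ n)) : lamA s t = 0 := by
  rw [Nat.even_iff] at hn
  simp only [lamA_eq_ite_mod]; split_ifs <;> omega

def QuasiCommute {G : Type*} [Group G] (c : G) (k : ℤ) (x y : G) : Prop :=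
  x * y = c ^ k * (y * x)

namespace QuasiCommute

variable {G : Type*} [Group G] {c x x' y y' : G} {k l : ℤ}

lemma of_commute (h : Commute x y) : QuasiCommute c 0 x y := by
  rw [QuasiCommute, zpow_zero, one_mul, h.eq]

lemma symm (h : QuasiCommute c k x y) : QuasiCommute c (-k) y x := by
  rw [QuasiCommute, h, zpow_neg, inv_mul_cancel_left]

variable (hc : ∀ g, Commute c g)
include hc

lemma mul_right (h : QuasiCommute c k x y) (h' : QuasiCommute c l x y') :
    QuasiCommute c (k + l) x (y * y') := by
  unfold QuasiCommute at *
  calc x * (y * y') = c ^ k * (y * (x * y')) := by rw [← mul_assoc, h]; group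
    _ = c ^ k * (y * (c ^ l * (y' * x))) := by rw [h']
    _ = c ^ (k + l) * (y * y' * x) := by
        rw [← mul_assoc y, ← ((hc y).zpow_left l).eq, zpow_add]; group

lemma mul_left (h : QuasiCommute c k x y) (h' : QuasiCommute c l x' y) :
    QuasiCommute c (k + l) (x * x') y := by
  simpa [add_comm] using (mul_right hc h.symm h'.symm).symm

lemma inv_left (h : QuasiCommute c k x y) : QuasiCommute c (-k) x⁻¹ y := by
  unfold QuasiCommute at *
  calc x⁻¹ * y = x⁻¹ * (c ^ (-k) * (x * y)) * x⁻¹ := by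
        rw [h]; group
    _ = c ^ (-k) * (y * x⁻¹) := by
        rw [← mul_assoc, ← ((hc x⁻¹).zpow_left (-k)).eq]; group

lemma inv_right (h : QuasiCommute c k x y) : QuasiCommute c (-k) x y⁻¹ := by
  simpa using (inv_left hc h.symm).symm

lemma inv_mul_inv_mul {u w v z : G} {k₁ k₂ k₃ k₄ : ℤ} (huv : QuasiCommute c k₁ u v)
    (huz : QuasiCommute c k₂ u z) (hwv : QuasiCommute c k₃ w v)
    (hwz : QuasiCommute c k₄ w z) :
    QuasiCommute c (k₁ - k₂ - k₃ + k₄) (u⁻¹ * w) (v⁻¹ * z) := by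
  have h := mul_left hc (mul_right hc (inv_right hc (inv_left hc huv)) (inv_left hc huz))
    (mul_right hc (inv_right hc hwv) hwz)
  simpa [sub_eq_add_neg, add_assoc] using h

lemma central_mul_left {d : G} (hd : ∀ g, Commute d g) (h : QuasiCommute c k x y) :
    QuasiCommute c k (d * x) y := by
  simpa using mul_left hc (of_commute (hd y)) h

lemma central_mul_right {d : G} (hd : ∀ g, Commute d g) (h : QuasiCommute c k x y) :
    QuasiCommute c k x (d * y) := by
  simpa using (central_mul_left hc hd h.symm).symm

end QuasiCommute

lemma Units.quasiCommute_iff {R : Type*} [Ring R] {c x y : Rˣ} {k : ℤ} :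
    QuasiCommute c k x y ↔ (x : R) * y = ((c ^ k : Rˣ) : R) * (y * x) := by
  simp only [QuasiCommute, Units.ext_iff, Units.val_mul]

lemma QuasiCommute.val_mul_val {R : Type*} [Ring R] {c x y : Rˣ} (h : QuasiCommute c 1 x y) :
    (x : R) * y = c * (y * x) := by
  simpa using Units.quasiCommute_iff.1 h

theorem add_mul_add_sub_one_eq {R : Type*} [Ring R] {q a b a' b' : R}
    (haa' : a * a' = q * (a' * a)) (hab' : a * b' = q * (b' * a))
    (hbb' : b * b' = q * (b' * b)) (hba' : b * a' = 1) (ha'b : a' * b = 1) :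
    (a + b) * (a' + b') - 1 = q * ((a' + b') * (a + b) - 1) := by
  simp only [add_mul, mul_add, haa', hab', hbb', hba', ha'b]
  noncomm_ring

section Mutation

variable {G : Type*} [Group G]

def extendByOne (n : ℕ) (Y : ℕ → G) (j : ℕ) : G := if 1 ≤ j ∧ j ≤ n then Y j else 1

lemma quasiCommute_extendByOne {c : G} {n : ℕ} {Y : ℕ → G} (hn : Even n)
    (hY : ∀ i j, 1 ≤ i → i ≤ n → 1 ≤ j → j ≤ n → QuasiCommute c (lamA i j) (Y i) (Y j))
    {s t : ℕ} (hs : s ≤ n + 1) (ht : t ≤ n + 1) :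
    QuasiCommute c (lamA s t) (extendByOne n Y s) (extendByOne n Y t) := by
  by_cases h : 1 ≤ s ∧ s ≤ n ∧ 1 ≤ t ∧ t ≤ n
  · obtain ⟨hs₁, hs₂, ht₁, ht₂⟩ := h
    simpa only [extendByOne, if_pos (And.intro hs₁ hs₂), if_pos (And.intro ht₁ ht₂)]
      using hY s t hs₁ hs₂ ht₁ ht₂
  · rw [lamA_eq_zero_off_Icc hn hs ht h]
    apply QuasiCommute.of_commute
    unfold extendByOne
    split_ifs <;> simp_all

/- These are the monomials `X^(-eⱼ + eⱼ₋₁)` and `X^(-eⱼ + eⱼ₊₁)`. Taking for `Z` the family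
`Y` extended by `1` at `0` and `n + 1`, their sum is `X'ⱼ` also at the boundary `j = 1, n`. -/
def mutatedTermPrev (ν : G) (Z : ℕ → G) (j : ℕ) : G :=
  ν ^ lamA j (j - 1) * ((Z j)⁻¹ * Z (j - 1))

def mutatedTermNext (ν : G) (Z : ℕ → G) (j : ℕ) : G :=
  ν ^ lamA j (j + 1) * ((Z j)⁻¹ * Z (j + 1))

variable {ν : G} (hν : ∀ g, Commute ν g)
include hν

lemma mutatedTermNext_mul_mutatedTermPrev_succ (Z : ℕ → G) (j : ℕ) :
    mutatedTermNext ν Z j * mutatedTermPrev ν Z (j + 1) = 1 := by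
  rw [mutatedTermNext, mutatedTermPrev, Nat.add_sub_cancel, lamA_swap j (j + 1), mul_assoc,
    ((hν _).zpow_left _).symm.left_comm]
  group

variable {Z : ℕ → G} {n : ℕ}
  (hZ : ∀ s t, s ≤ n + 1 → t ≤ n + 1 → QuasiCommute (ν ^ 2) (lamA s t) (Z s) (Z t))
include hZ

lemma quasiCommute_zpow_mul_inv_mul {p q r s : ℕ} (hp : p ≤ n + 1) (hq : q ≤ n + 1)
    (hr : r ≤ n + 1) (hs : s ≤ n + 1) (a b : ℤ) :
    QuasiCommute (ν ^ 2) (lamA p r - lamA p s - lamA q r + lamA q s)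
      (ν ^ a * ((Z p)⁻¹ * Z q)) (ν ^ b * ((Z r)⁻¹ * Z s)) := by
  have hc : ∀ g, Commute (ν ^ 2) g := fun g => (hν g).pow_left 2
  exact ((QuasiCommute.inv_mul_inv_mul hc (hZ p r hp hr) (hZ p s hp hs) (hZ q r hq hr)
    (hZ q s hq hs)).central_mul_left hc fun g => (hν g).zpow_left a).central_mul_right hc
    fun g => (hν g).zpow_left b

variable {i : ℕ} (hin : i < n)
include hin

lemma quasiCommute_mutatedTermPrev_mutatedTermPrev_succ (hi : 1 ≤ i) :
    QuasiCommute (ν ^ 2) 1 (mutatedTermPrev ν Z i) (mutatedTermPrev ν Z (i + 1)) := by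
  have h := quasiCommute_zpow_mul_inv_mul hν hZ (p := i) (q := i - 1) (r := i + 1) (s := i)
    (by omega) (by omega) (by omega) (by omega) (lamA i (i - 1)) (lamA (i + 1) i)
  rwa [show lamA i (i + 1) - lamA i i - lamA (i - 1) (i + 1) + lamA (i - 1) i = 1 by
    simp only [lamA_eq_ite_mod]; split_ifs <;> omega] at h

lemma quasiCommute_mutatedTermPrev_mutatedTermNext_succ (hi : 1 ≤ i) :
    QuasiCommute (ν ^ 2) 1 (mutatedTermPrev ν Z i) (mutatedTermNext ν Z (i + 1)) := by
  have h := quasiCommute_zpow_mul_inv_mul hν hZ (p := i) (q := i - 1) (r := i + 1) (s := i + 2)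
    (by omega) (by omega) (by omega) (by omega) (lamA i (i - 1)) (lamA (i + 1) (i + 2))
  rwa [show lamA i (i + 1) - lamA i (i + 2) - lamA (i - 1) (i + 1) + lamA (i - 1) (i + 2) = 1 by
    simp only [lamA_eq_ite_mod]; split_ifs <;> omega] at h

lemma quasiCommute_mutatedTermNext_mutatedTermNext_succ :
    QuasiCommute (ν ^ 2) 1 (mutatedTermNext ν Z i) (mutatedTermNext ν Z (i + 1)) := by
  have h := quasiCommute_zpow_mul_inv_mul hν hZ (p := i) (q := i + 1) (r := i + 1) (s := i + 2)
    (by omega) (by omega) (by omega) (by omega) (lamA i (i + 1)) (lamA (i + 1) (i + 2))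
  rwa [show lamA i (i + 1) - lamA i (i + 2) - lamA (i + 1) (i + 1) + lamA (i + 1) (i + 2) = 1 by
    simp only [lamA_eq_ite_mod]; split_ifs <;> omega] at h

end Mutation

lemma eq_mutatedTermPrev_add_mutatedTermNext {R : Type*} [Ring R] {n : ℕ} (hn : 2 ≤ n)
    (hneven : Even n) {ν : Rˣ} {Y : ℕ → Rˣ} {X' : ℕ → R}
    (hX1 : X' 1 = (((Y 1)⁻¹ : Rˣ) : R) + (ν : R) * (((Y 1)⁻¹ : Rˣ) : R) * (Y 2 : R))
    (hXn : X' n = ((ν⁻¹ : Rˣ) : R) * (((Y n)⁻¹ : Rˣ) : R) * (Y (n - 1) : R)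
      + (((Y n)⁻¹ : Rˣ) : R))
    (hXmid : ∀ i, 1 < i → i < n →
      X' i = (((ν ^ (lamA i (i - 1)) : Rˣ)) : R) * (((Y i)⁻¹ : Rˣ) : R) * (Y (i - 1) : R)
        + (((ν ^ (lamA i (i + 1)) : Rˣ)) : R) * (((Y i)⁻¹ : Rˣ) : R) * (Y (i + 1) : R))
    {j : ℕ} (hj₁ : 1 ≤ j) (hjn : j ≤ n) :
    X' j = ((mutatedTermPrev ν (extendByOne n Y) j : Rˣ) : R)
      + ((mutatedTermNext ν (extendByOne n Y) j : Rˣ) : R) := by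
  have hZ : ∀ k, 1 ≤ k → k ≤ n → extendByOne n Y k = Y k := fun k h₁ h₂ => if_pos ⟨h₁, h₂⟩
  simp only [mutatedTermPrev, mutatedTermNext, Units.val_mul, ← mul_assoc]
  rcases (show j = 1 ∨ j = n ∨ (1 < j ∧ j < n) by omega) with rfl | rfl | ⟨hj₁, hjn⟩
  · have hZ₀ : extendByOne n Y 0 = 1 := if_neg (by omega)
    rw [hX1, hZ 1 le_rfl (by omega), hZ 2 (by omega) hn, hZ₀, show lamA 1 0 = 0 by decide,
      show lamA 1 2 = 1 by decide]
    simp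
  · have hZ₁ : extendByOne j Y (j + 1) = 1 := if_neg (by omega)
    rw [Nat.even_iff] at hneven
    rw [hXn, hZ j (by omega) le_rfl, hZ (j - 1) (by omega) (by omega), hZ₁,
      show lamA j (j - 1) = -1 by simp only [lamA_eq_ite_mod]; split_ifs <;> omega,
      show lamA j (j + 1) = 0 by simp only [lamA_eq_ite_mod]; split_ifs <;> omega]
    simp
  · rw [hXmid j hj₁ hjn, hZ j (by omega) (by omega), hZ (j - 1) (by omega) (by omega),
      hZ (j + 1) (by omega) (by omega)]

theorem adjacent_mutated_variables_quasi_commute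
    (n : ℕ) (hn : 2 ≤ n) (hneven : Even n)
    (R : Type*) [Ring R] (ν : Rˣ) (hcen : ∀ r : R, (ν : R) * r = r * (ν : R))
    (Y : ℕ → Rˣ)
    (hY : ∀ i j, 1 ≤ i → i ≤ n → 1 ≤ j → j ≤ n →
      (Y i : R) * (Y j : R) =
        (((ν ^ 2 : Rˣ) ^ (lamA i j) : Rˣ) : R) * ((Y j : R) * (Y i : R)))
    (X' : ℕ → R)
    (hX1 : X' 1 = (((Y 1)⁻¹ : Rˣ) : R) + (ν : R) * (((Y 1)⁻¹ : Rˣ) : R) * (Y 2 : R))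
    (hXn : X' n = ((ν⁻¹ : Rˣ) : R) * (((Y n)⁻¹ : Rˣ) : R) * (Y (n - 1) : R)
      + (((Y n)⁻¹ : Rˣ) : R))
    (hXmid : ∀ i, 1 < i → i < n →
      X' i = (((ν ^ (lamA i (i - 1)) : Rˣ)) : R) * (((Y i)⁻¹ : Rˣ) : R) * (Y (i - 1) : R)
        + (((ν ^ (lamA i (i + 1)) : Rˣ)) : R) * (((Y i)⁻¹ : Rˣ) : R) * (Y (i + 1) : R)) :
    ∀ i, 1 ≤ i → i < n →
      X' i * X' (i + 1) - 1 = ((ν : R) ^ 2) * (X' (i + 1) * X' i - 1) := by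
  intro i hi hin
  have hν : ∀ g : Rˣ, Commute ν g := fun g => Units.ext (hcen g)
  have hZ : ∀ s t, s ≤ n + 1 → t ≤ n + 1 →
      QuasiCommute (ν ^ 2) (lamA s t) (extendByOne n Y s) (extendByOne n Y t) :=
    fun s t hs ht => quasiCommute_extendByOne hneven
      (fun i j hi₁ hi₂ hj₁ hj₂ => Units.quasiCommute_iff.2 (hY i j hi₁ hi₂ hj₁ hj₂)) hs ht
  have hba := mutatedTermNext_mul_mutatedTermPrev_succ hν (extendByOne n Y) i
  rw [eq_mutatedTermPrev_add_mutatedTermNext hn hneven hX1 hXn hXmid hi hin.le,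
    eq_mutatedTermPrev_add_mutatedTermNext hn hneven hX1 hXn hXmid (by omega) hin,
    ← Units.val_pow_eq_pow_val]
  exact add_mul_add_sub_one_eq
    (quasiCommute_mutatedTermPrev_mutatedTermPrev_succ hν hZ hin hi).val_mul_val
    (quasiCommute_mutatedTermPrev_mutatedTermNext_succ hν hZ hin hi).val_mul_val
    (quasiCommute_mutatedTermNext_mutatedTermNext_succ hν hZ hin).val_mul_val
    (by simpa using congrArg Units.val hba)
    (by simpa using congrArg Units.val (mul_eq_one_comm.1 hba))
end

section
/- Non-adjacent one-step mutated quantum cluster variables q-commute: for every i ≥ 1 and every integer k with 1 < k ≤ n − i, one has X'_i X'_{i+k} = q^{(−1)^{k−1}} X'_{i+k} X'_i. -/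
def QCommute {M : Type*} [Mul M] (c x y : M) : Prop :=
  x * y = c * (y * x)

namespace QCommute

section Mul

variable {M : Type*} [Mul M] {c x y : M}

theorem map {N F : Type*} [Mul N] [FunLike F M N] [MulHomClass F M N] (f : F)
    (h : QCommute c x y) : QCommute (f c) (f x) (f y) := by
  simp only [QCommute, ← map_mul]
  rw [h]

end Mul

section Distrib

variable {R : Type*} [Distrib R] {c x x' y y' : R}

theorem add_left (h : QCommute c x y) (h' : QCommute c x' y) : QCommute c (x + x') y := by
  rw [QCommute, add_mul, h, h', ← mul_add, ← mul_add]

theorem add_right (h : QCommute c x y) (h' : QCommute c x y') : QCommute c x (y + y') := by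
  rw [QCommute, mul_add, h, h', ← mul_add, ← add_mul]

end Distrib

section Group

open Subgroup

variable {G : Type*} [Group G] {c d x x' y y' : G}

theorem symm (h : QCommute c x y) : QCommute c⁻¹ y x := by
  rw [QCommute, h, inv_mul_cancel_left]

theorem one_left (hx : x ∈ center G) (y : G) : QCommute 1 x y := by
  rw [QCommute, one_mul, mem_center_iff.mp hx]

theorem one_right (hy : y ∈ center G) (x : G) : QCommute 1 x y := by
  simpa using (one_left hy x).symm

theorem mul_right (hd : d ∈ center G) (h : QCommute c x y) (h' : QCommute d x y') :
    QCommute (c * d) x (y * y') := by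
  rw [QCommute, ← mul_assoc, h, mul_assoc, mul_assoc, h', ← mul_assoc y d,
    mem_center_iff.mp hd y]
  simp only [mul_assoc]

theorem mul_left (hd : d ∈ center G) (h : QCommute c x y) (h' : QCommute d x' y) :
    QCommute (c * d) (x * x') y := by
  have := (mul_right (inv_mem hd) h.symm h'.symm).symm
  rwa [mul_inv_rev, inv_inv, inv_inv, ← mem_center_iff.mp hd] at this

theorem inv_left (hc : c ∈ center G) (h : QCommute c x y) : QCommute c⁻¹ x⁻¹ y := by
  calc x⁻¹ * y = x⁻¹ * (c⁻¹ * (x * y)) * x⁻¹ := by rw [h]; group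
    _ = c⁻¹ * (y * x⁻¹) := by rw [← mul_assoc, mem_center_iff.mp (inv_mem hc)]; group

theorem inv_right (hc : c ∈ center G) (h : QCommute c x y) : QCommute c⁻¹ x y⁻¹ := by
  simpa using (inv_left (inv_mem hc) h.symm).symm

theorem central_mul_left {u : G} (hu : u ∈ center G) (hc : c ∈ center G) (h : QCommute c x y) :
    QCommute c (u * x) y := by
  simpa using mul_left hc (one_left hu y) h

theorem central_mul_right {u : G} (hu : u ∈ center G) (hc : c ∈ center G) (h : QCommute c x y) :
    QCommute c x (u * y) := by
  simpa using mul_right hc (one_right hu x) h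

theorem inv_mul_inv_mul {q : G} (hq : q ∈ center G) {z₁ z₂ z₃ z₄ : ℤ}
    (h₁ : QCommute (q ^ z₁) x x') (h₂ : QCommute (q ^ z₂) x y')
    (h₃ : QCommute (q ^ z₃) y x') (h₄ : QCommute (q ^ z₄) y y') :
    QCommute (q ^ (z₁ - z₂ - z₃ + z₄)) (x⁻¹ * y) (x'⁻¹ * y') := by
  have hz : ∀ z : ℤ, q ^ z ∈ center G := fun z => zpow_mem hq z
  have := mul_left (mul_mem (inv_mem (hz _)) (hz _))
    (mul_right (inv_mem (hz _)) (inv_left (inv_mem (hz _)) (inv_right (hz _) h₁))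
      (inv_left (hz _) h₂))
    (mul_right (hz _) (inv_right (hz _) h₃) h₄)
  convert this using 2
  group

end Group

end QCommute

theorem lamA_of_le {i j : ℕ} (h : i ≤ j) : lamA i j = if Odd i ∧ Even j then 1 else 0 := by
  simp only [lamA, Nat.odd_iff, Nat.even_iff]
  split_ifs <;> omega

theorem lamA_cross {i k a b : ℕ} (hi : 1 ≤ i) (hk : 2 ≤ k)
    (ha : a = i - 1 ∨ a = i + 1) (hb : b = i + k - 1 ∨ b = i + k + 1) :
    lamA i (i + k) - lamA i b - lamA a (i + k) + lamA a b = (-1 : ℤ) ^ (k - 1) := by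
  have hai : Odd a ↔ ¬Odd i := by simp only [Nat.odd_iff]; omega
  have hbk : Even b ↔ ¬Even (i + k) := by simp only [Nat.even_iff]; omega
  rw [lamA_of_le (by omega : i ≤ i + k), lamA_of_le (by omega : i ≤ b),
    lamA_of_le (by omega : a ≤ i + k), lamA_of_le (by omega : a ≤ b)]
  simp only [hai, hbk]
  obtain ⟨m, rfl⟩ : ∃ m, k = m + 1 := ⟨k - 1, by omega⟩
  rcases Nat.even_or_odd i with hi | hi <;> rcases Nat.even_or_odd m with hm | hm <;>
    simp [hi, hm, hm.neg_one_pow, parity_simps, Nat.not_even_iff_odd, Nat.not_odd_iff_even]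

theorem lamA_eq_zero_of_boundary {n a b : ℕ} (hn : Even n) (ha : a ≤ n + 1) (hb : b ≤ n + 1)
    (h : a = 0 ∨ a = n + 1 ∨ b = 0 ∨ b = n + 1) : lamA a b = 0 := by
  simp only [lamA, Nat.odd_iff, Nat.even_iff] at hn ⊢
  split_ifs <;> omega

section Mutation

open Subgroup

variable {G : Type*} [Group G] {ν : G}

/-- The monomial `X^{-e_m + e_a}` of the quantum torus. -/
def mutationMonomial (ν : G) (Y : ℕ → G) (m a : ℕ) : G :=
  ν ^ lamA m a * ((Y m)⁻¹ * Y a)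

theorem qCommute_mutationMonomial (hν : ν ∈ center G) {Y : ℕ → G} {i k a b : ℕ}
    (hY : ∀ c d, c ≤ i + k + 1 → d ≤ i + k + 1 → QCommute ((ν ^ 2) ^ lamA c d) (Y c) (Y d))
    (hi : 1 ≤ i) (hk : 2 ≤ k) (ha : a = i - 1 ∨ a = i + 1) (hb : b = i + k - 1 ∨ b = i + k + 1) :
    QCommute ((ν ^ 2) ^ (-1 : ℤ) ^ (k - 1)) (mutationMonomial ν Y i a)
      (mutationMonomial ν Y (i + k) b) := by
  have hq : ν ^ 2 ∈ center G := pow_mem hν 2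
  rw [← lamA_cross hi hk ha hb]
  have hmon := QCommute.inv_mul_inv_mul hq
    (hY i (i + k) (by omega) (by omega)) (hY i b (by omega) (by omega))
    (hY a (i + k) (by omega) (by omega)) (hY a b (by omega) (by omega))
  exact (hmon.central_mul_left (zpow_mem hν _) (zpow_mem hq _)).central_mul_right
    (zpow_mem hν _) (zpow_mem hq _)

theorem qCommute_mulIndicator {n : ℕ} (hn : Even n) {Y : ℕ → G}
    (hY : ∀ a b, 1 ≤ a → a ≤ n → 1 ≤ b → b ≤ n → QCommute ((ν ^ 2) ^ lamA a b) (Y a) (Y b))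
    {a b : ℕ} (ha : a ≤ n + 1) (hb : b ≤ n + 1) :
    QCommute ((ν ^ 2) ^ lamA a b) ((Set.Icc 1 n).mulIndicator Y a)
      ((Set.Icc 1 n).mulIndicator Y b) := by
  by_cases h : a ∈ Set.Icc 1 n ∧ b ∈ Set.Icc 1 n
  · rw [Set.mulIndicator_of_mem h.1, Set.mulIndicator_of_mem h.2]
    exact hY _ _ h.1.1 h.1.2 h.2.1 h.2.2
  · rw [lamA_eq_zero_of_boundary hn ha hb (by simp only [Set.mem_Icc] at h; omega), zpow_zero]
    rcases not_and_or.mp h with h | h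
    · rw [Set.mulIndicator_of_notMem h]
      exact .one_left (one_mem _) _
    · rw [Set.mulIndicator_of_notMem h]
      exact .one_right (one_mem _) _

variable {R : Type*} [Semiring R]

def mutatedVariable (ν : Rˣ) (Y : ℕ → Rˣ) (m : ℕ) : R :=
  ((mutationMonomial ν Y m (m - 1) : Rˣ) : R) + ((mutationMonomial ν Y m (m + 1) : Rˣ) : R)

theorem qCommute_mutatedVariable {ν : Rˣ} (hν : ν ∈ center Rˣ) {Y : ℕ → Rˣ} {i k : ℕ}
    (hY : ∀ c d, c ≤ i + k + 1 → d ≤ i + k + 1 → QCommute ((ν ^ 2) ^ lamA c d) (Y c) (Y d))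
    (hi : 1 ≤ i) (hk : 2 ≤ k) :
    QCommute (((ν ^ 2) ^ (-1 : ℤ) ^ (k - 1) : Rˣ) : R) (mutatedVariable ν Y i)
      (mutatedVariable ν Y (i + k)) := by
  have h : ∀ a b, (a = i - 1 ∨ a = i + 1) → (b = i + k - 1 ∨ b = i + k + 1) →
      QCommute (((ν ^ 2) ^ (-1 : ℤ) ^ (k - 1) : Rˣ) : R) ((mutationMonomial ν Y i a : Rˣ) : R)
        ((mutationMonomial ν Y (i + k) b : Rˣ) : R) := fun a b ha hb =>
    (qCommute_mutationMonomial hν hY hi hk ha hb).map (Units.coeHom R)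
  unfold mutatedVariable
  exact .add_left (.add_right (h _ _ (.inl rfl) (.inl rfl)) (h _ _ (.inl rfl) (.inr rfl)))
    (.add_right (h _ _ (.inr rfl) (.inl rfl)) (h _ _ (.inr rfl) (.inr rfl)))

section MulIndicator

variable {ν : Rˣ} {Y : ℕ → Rˣ} {n : ℕ}

theorem mulIndicator_Icc_of_mem {j : ℕ} (h₁ : 1 ≤ j) (h₂ : j ≤ n) :
    (Set.Icc 1 n).mulIndicator Y j = Y j :=
  Set.mulIndicator_of_mem (Set.mem_Icc.mpr ⟨h₁, h₂⟩) Y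

theorem mutatedVariable_mulIndicator_one (hn : 2 ≤ n) :
    mutatedVariable ν ((Set.Icc 1 n).mulIndicator Y) 1 =
      (((Y 1)⁻¹ : Rˣ) : R) + (ν : R) * (((Y 1)⁻¹ : Rˣ) : R) * (Y 2 : R) := by
  have hl₀ : lamA 1 0 = 0 := by decide
  have hl₂ : lamA 1 2 = 1 := by decide
  simp [mutatedVariable, mutationMonomial, hl₀, hl₂, mulIndicator_Icc_of_mem le_rfl
    (one_le_two.trans hn), mulIndicator_Icc_of_mem one_le_two hn, mul_assoc]

theorem mutatedVariable_mulIndicator_of_lt {m : ℕ} (h₁ : 1 < m) (h₂ : m < n) :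
    mutatedVariable ν ((Set.Icc 1 n).mulIndicator Y) m =
      (((ν ^ (lamA m (m - 1)) : Rˣ)) : R) * (((Y m)⁻¹ : Rˣ) : R) * (Y (m - 1) : R)
        + (((ν ^ (lamA m (m + 1)) : Rˣ)) : R) * (((Y m)⁻¹ : Rˣ) : R) * (Y (m + 1) : R) := by
  simp [mutatedVariable, mutationMonomial, mulIndicator_Icc_of_mem h₁.le h₂.le,
    mulIndicator_Icc_of_mem (n := n) (j := m - 1) (by omega) (by omega),
    mulIndicator_Icc_of_mem (n := n) (j := m + 1) (by omega) h₂, mul_assoc]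

theorem mutatedVariable_mulIndicator_self (hn : Even n) (h₂ : 2 ≤ n) :
    mutatedVariable ν ((Set.Icc 1 n).mulIndicator Y) n =
      ((ν⁻¹ : Rˣ) : R) * (((Y n)⁻¹ : Rˣ) : R) * (Y (n - 1) : R) + (((Y n)⁻¹ : Rˣ) : R) := by
  have hl₀ : lamA n (n + 1) = 0 := lamA_eq_zero_of_boundary hn (by omega) le_rfl (by omega)
  have hl₁ : lamA n (n - 1) = -1 := by
    have := Nat.even_iff.mp hn
    simp only [lamA, Nat.odd_iff, Nat.even_iff]
    split_ifs <;> omega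
  simp [mutatedVariable, mutationMonomial, hl₀, hl₁,
    mulIndicator_Icc_of_mem (n := n) (by omega) le_rfl,
    mulIndicator_Icc_of_mem (n := n) (j := n - 1) (by omega) (by omega), mul_assoc]

end MulIndicator

end Mutation

theorem nonadjacent_mutated_variables_q_commute_general
    (n : ℕ) (hneven : Even n)
    (R : Type*) [Ring R] (ν : Rˣ) (hcen : ∀ r : R, (ν : R) * r = r * (ν : R))
    (Y : ℕ → Rˣ)
    (hY : ∀ i j, 1 ≤ i → i ≤ n → 1 ≤ j → j ≤ n →
      (Y i : R) * (Y j : R) =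
        (((ν ^ 2 : Rˣ) ^ (lamA i j) : Rˣ) : R) * ((Y j : R) * (Y i : R)))
    (X' : ℕ → R)
    (hX1 : X' 1 = (((Y 1)⁻¹ : Rˣ) : R) + (ν : R) * (((Y 1)⁻¹ : Rˣ) : R) * (Y 2 : R))
    (hXn : X' n = ((ν⁻¹ : Rˣ) : R) * (((Y n)⁻¹ : Rˣ) : R) * (Y (n - 1) : R)
      + (((Y n)⁻¹ : Rˣ) : R))
    (hXmid : ∀ i, 1 < i → i < n →
      X' i = (((ν ^ (lamA i (i - 1)) : Rˣ)) : R) * (((Y i)⁻¹ : Rˣ) : R) * (Y (i - 1) : R)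
        + (((ν ^ (lamA i (i + 1)) : Rˣ)) : R) * (((Y i)⁻¹ : Rˣ) : R) * (Y (i + 1) : R)) :
    ∀ i k, 1 ≤ i → 1 < k → k ≤ n - i →
      X' i * X' (i + k) =
        (((ν ^ 2 : Rˣ) ^ ((-1 : ℤ) ^ (k - 1)) : Rˣ) : R) * (X' (i + k) * X' i) := by
  intro i k hi hk hkn
  have hν : ν ∈ Subgroup.center Rˣ := Subgroup.mem_center_iff.mpr fun u => Units.ext (hcen u).symm
  set Y' := (Set.Icc 1 n).mulIndicator Y
  have hY' : ∀ a b, a ≤ i + k + 1 → b ≤ i + k + 1 → QCommute ((ν ^ 2) ^ lamA a b) (Y' a) (Y' b) :=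
    fun a b ha hb => qCommute_mulIndicator hneven
      (fun a b h₁ h₂ h₃ h₄ => Units.ext (by simpa using hY a b h₁ h₂ h₃ h₄)) (by omega) (by omega)
  have hX : ∀ m, 1 ≤ m → m ≤ n → X' m = mutatedVariable ν Y' m := by
    intro m h₁ h₂
    rcases (by omega : m = 1 ∨ 1 < m ∧ m < n ∨ m = n) with rfl | ⟨h₁, h₂⟩ | rfl
    · rw [hX1, mutatedVariable_mulIndicator_one (by omega)]
    · rw [hXmid m h₁ h₂, mutatedVariable_mulIndicator_of_lt h₁ h₂]
    · rw [hXn, mutatedVariable_mulIndicator_self hneven (by omega)]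
  rw [hX i hi (by omega), hX (i + k) (by omega) (by omega)]
  exact qCommute_mutatedVariable hν hY' hi hk

theorem nonadjacent_mutated_variables_q_commute
    (n : ℕ) (hn : 2 ≤ n) (hneven : Even n)
    (R : Type*) [Ring R] (ν : Rˣ) (hcen : ∀ r : R, (ν : R) * r = r * (ν : R))
    (Y : ℕ → Rˣ)
    (hY : ∀ i j, 1 ≤ i → i ≤ n → 1 ≤ j → j ≤ n →
      (Y i : R) * (Y j : R) =
        (((ν ^ 2 : Rˣ) ^ (lamA i j) : Rˣ) : R) * ((Y j : R) * (Y i : R)))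
    (X' : ℕ → R)
    (hX1 : X' 1 = (((Y 1)⁻¹ : Rˣ) : R) + (ν : R) * (((Y 1)⁻¹ : Rˣ) : R) * (Y 2 : R))
    (hXn : X' n = ((ν⁻¹ : Rˣ) : R) * (((Y n)⁻¹ : Rˣ) : R) * (Y (n - 1) : R)
      + (((Y n)⁻¹ : Rˣ) : R))
    (hXmid : ∀ i, 1 < i → i < n →
      X' i = (((ν ^ (lamA i (i - 1)) : Rˣ)) : R) * (((Y i)⁻¹ : Rˣ) : R) * (Y (i - 1) : R)
        + (((ν ^ (lamA i (i + 1)) : Rˣ)) : R) * (((Y i)⁻¹ : Rˣ) : R) * (Y (i + 1) : R)) :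
    ∀ i k, 1 ≤ i → 1 < k → k ≤ n - i →
      X' i * X' (i + k) =
        (((ν ^ 2 : Rˣ) ^ ((-1 : ℤ) ^ (k - 1)) : Rˣ) : R) * (X' (i + k) * X' i) :=
  nonadjacent_mutated_variables_q_commute_general n hneven R ν hcen Y hY X' hX1 hXn hXmid
end

section
/- A quantum frieze pattern with invertible values is entirely determined by its values on the initial column: if f and g are quantum frieze patterns such that every value f(i,j) with 1 ≤ i ≤ n and j ∈ ℤ is invertible in D, and f(i,0) = g(i,0) for all 1 ≤ i ≤ n, then f(i,j) = g(i,j) for all 0 ≤ i ≤ n+1 and all j ∈ ℤ. -/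
/-!
The frieze relation `f i j * f i (j + 1) = 1 + ν * f (i - 1) (j + 1) * f (i + 1) j`, after
cancelling the invertible factor `f i j` (resp. `f i (j + 1)`), computes `f i (j + 1)` from
entries of column `j` and the entry above it in column `j + 1` (resp. `f i j` from entries of
column `j + 1` and the entry below it in column `j`). Since rows `0` and `n + 1` are constant,
agreement of two friezes on one column therefore spreads row by row to both neighbouring
columns, and by induction to all of `ℤ`.
-/

structure IsQuantumFrieze {D : Type*} [Ring D] (n : ℕ) (ν : D) (f : ℕ → ℤ → D) : Prop where
  top : ∀ j, f 0 j = 1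
  bottom : ∀ j, f (n + 1) j = 1
  rel : ∀ (i : ℕ) (j : ℤ), 1 ≤ i → i ≤ n →
    f i j * f i (j + 1) - ν * (f (i - 1) (j + 1) * f (i + 1) j) = 1

namespace IsQuantumFrieze

variable {D : Type*} [Ring D] {n : ℕ} {ν : D} {f g : ℕ → ℤ → D}

theorem mul_succ_eq (hf : IsQuantumFrieze n ν f) {i : ℕ} (j : ℤ) (h1 : 1 ≤ i) (hn : i ≤ n) :
    f i j * f i (j + 1) = 1 + ν * (f (i - 1) (j + 1) * f (i + 1) j) :=
  eq_add_of_sub_eq (hf.rel i j h1 hn)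

theorem column_eq_of_interior (hf : IsQuantumFrieze n ν f) (hg : IsQuantumFrieze n ν g) {j : ℤ}
    (h : ∀ i, 1 ≤ i → i ≤ n → f i j = g i j) : ∀ i ≤ n + 1, f i j = g i j := by
  intro i hi
  rcases Nat.eq_zero_or_pos i with rfl | hpos
  · rw [hf.top, hg.top]
  rcases hi.eq_or_lt with rfl | hlt
  · rw [hf.bottom, hg.bottom]
  exact h i hpos (Nat.lt_succ_iff.mp hlt)

theorem column_succ_eq (hf : IsQuantumFrieze n ν f) (hg : IsQuantumFrieze n ν g)
    (hunit : ∀ (i : ℕ) (j : ℤ), 1 ≤ i → i ≤ n → IsUnit (f i j)) {j : ℤ}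
    (hcol : ∀ i ≤ n + 1, f i j = g i j) : ∀ i ≤ n + 1, f i (j + 1) = g i (j + 1) := by
  intro i
  induction i with
  | zero => intro _; rw [hf.top, hg.top]
  | succ i ih =>
    intro hi
    rcases hi.eq_or_lt with hlast | hlt
    · rw [hlast, hf.bottom, hg.bottom]
    have h1 : 1 ≤ i + 1 := Nat.le_add_left 1 i
    have hn : i + 1 ≤ n := Nat.lt_succ_iff.mp hlt
    have key : f (i + 1) j * f (i + 1) (j + 1) = f (i + 1) j * g (i + 1) (j + 1) := by
      rw [hf.mul_succ_eq j h1 hn, hcol (i + 1) hi, hg.mul_succ_eq j h1 hn, Nat.add_sub_cancel,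
        ih (by omega), hcol (i + 2) (by omega)]
    exact (hunit (i + 1) j h1 hn).mul_left_cancel key

theorem column_eq_of_succ (hf : IsQuantumFrieze n ν f) (hg : IsQuantumFrieze n ν g)
    (hunit : ∀ (i : ℕ) (j : ℤ), 1 ≤ i → i ≤ n → IsUnit (f i j)) {j : ℤ}
    (hcol : ∀ i ≤ n + 1, f i (j + 1) = g i (j + 1)) : ∀ i ≤ n + 1, f i j = g i j := by
  intro i hi
  induction hi using Nat.decreasingInduction with
  | self => rw [hf.bottom, hg.bottom]
  | of_succ i hlt ih =>
    rcases Nat.eq_zero_or_pos i with rfl | h1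
    · rw [hf.top, hg.top]
    have hn : i ≤ n := Nat.lt_succ_iff.mp hlt
    have key : f i j * f i (j + 1) = g i j * f i (j + 1) := by
      rw [hf.mul_succ_eq j h1 hn, hcol i hlt.le, hg.mul_succ_eq j h1 hn, hcol (i - 1) (by omega),
        ih]
    exact (hunit i (j + 1) h1 hn).mul_right_cancel key

theorem eq_of_column_eq (hf : IsQuantumFrieze n ν f) (hg : IsQuantumFrieze n ν g)
    (hunit : ∀ (i : ℕ) (j : ℤ), 1 ≤ i → i ≤ n → IsUnit (f i j)) {j₀ : ℤ}
    (hcol : ∀ i ≤ n + 1, f i j₀ = g i j₀) (i : ℕ) (j : ℤ) (hi : i ≤ n + 1) : f i j = g i j := by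
  induction j using Int.inductionOn' (b := j₀) generalizing i with
  | zero => exact hcol i hi
  | succ k _ ih => exact hf.column_succ_eq hg hunit ih i hi
  | pred k _ ih =>
    refine hf.column_eq_of_succ hg hunit ?_ i hi
    rwa [sub_add_cancel]

end IsQuantumFrieze

theorem quantum_frieze_pattern_determined_by_initial_column_general
    (n : ℕ)
    (D : Type*) [Ring D] (ν : Dˣ)
    (f g : ℕ → ℤ → D)
    (hf0 : ∀ j : ℤ, f 0 j = 1) (hfn : ∀ j : ℤ, f (n + 1) j = 1)
    (hfrel : ∀ (i : ℕ) (j : ℤ), 1 ≤ i → i ≤ n →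
      f i j * f i (j + 1) - (ν : D) * (f (i - 1) (j + 1) * f (i + 1) j) = 1)
    (hg0 : ∀ j : ℤ, g 0 j = 1) (hgn : ∀ j : ℤ, g (n + 1) j = 1)
    (hgrel : ∀ (i : ℕ) (j : ℤ), 1 ≤ i → i ≤ n →
      g i j * g i (j + 1) - (ν : D) * (g (i - 1) (j + 1) * g (i + 1) j) = 1)
    (hunit : ∀ (i : ℕ) (j : ℤ), 1 ≤ i → i ≤ n → IsUnit (f i j))
    (hinit : ∀ i : ℕ, 1 ≤ i → i ≤ n → f i 0 = g i 0) :
    ∀ (i : ℕ) (j : ℤ), i ≤ n + 1 → f i j = g i j := by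
  have hf : IsQuantumFrieze n (ν : D) f := ⟨hf0, hfn, hfrel⟩
  have hg : IsQuantumFrieze n (ν : D) g := ⟨hg0, hgn, hgrel⟩
  exact hf.eq_of_column_eq hg hunit (hf.column_eq_of_interior hg hinit)

/-- A quantum frieze pattern (for the linearly oriented type `A_n` quiver) with invertible
values is entirely determined by its values on the initial column `{(i,0) : 1 ≤ i ≤ n}`. -/
theorem quantum_frieze_pattern_determined_by_initial_column
    (n : ℕ) (hn : 1 ≤ n)
    (D : Type*) [Ring D] (ν : Dˣ) (hcen : ∀ r : D, (ν : D) * r = r * (ν : D))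
    (f g : ℕ → ℤ → D)
    (hf0 : ∀ j : ℤ, f 0 j = 1) (hfn : ∀ j : ℤ, f (n + 1) j = 1)
    (hfrel : ∀ (i : ℕ) (j : ℤ), 1 ≤ i → i ≤ n →
      f i j * f i (j + 1) - (ν : D) * (f (i - 1) (j + 1) * f (i + 1) j) = 1)
    (hg0 : ∀ j : ℤ, g 0 j = 1) (hgn : ∀ j : ℤ, g (n + 1) j = 1)
    (hgrel : ∀ (i : ℕ) (j : ℤ), 1 ≤ i → i ≤ n →
      g i j * g i (j + 1) - (ν : D) * (g (i - 1) (j + 1) * g (i + 1) j) = 1)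
    (hunit : ∀ (i : ℕ) (j : ℤ), 1 ≤ i → i ≤ n → IsUnit (f i j))
    (hinit : ∀ i : ℕ, 1 ≤ i → i ≤ n → f i 0 = g i 0) :
    ∀ (i : ℕ) (j : ℤ), i ≤ n + 1 → f i j = g i j :=
  quantum_frieze_pattern_determined_by_initial_column_general n D ν f g hf0 hfn hfrel hg0 hgn hgrel
    hunit hinit
end

section
/- A φ-periodic quantum frieze pattern with invertible values is entirely determined by its values on the set {(1,j) : 0 ≤ j ≤ n}: if f and g are φ-periodic quantum frieze patterns such that every value f(i,j) with 1 ≤ i ≤ n and j ∈ ℤ is invertible in D, and f(1,j) = g(1,j) for all 0 ≤ j ≤ n, then f(i,j) = g(i,j) for all 0 ≤ i ≤ n+1 and all j ∈ ℤ. -/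
/-!
The frieze relation at row `i` expresses `ν · f(i-1, j+1) · f(i+1, j)` through row `i`, so once
rows `0` and `1` are known on an interval of columns, invertibility of the entries lets one solve
for row `i + 1` on a shrinking interval.  Applied to the columns `0, …, n` this yields row `n` at
columns `0` and `1`, which by φ-periodicity are the values of row `1` at columns `n + 1` and `n + 2`.
Since φ-periodicity also makes row `1` periodic of period `n + 3`, row `1` is then known everywhere,
and the same propagation gives every row.
-/

theorem eq_of_frieze_relation {D : Type*} [Ring D] (ν : Dˣ) {a b c d d' : D} (hc : IsUnit c)
    (h : a * b - ν * (c * d) = 1) (h' : a * b - ν * (c * d') = 1) : d = d' :=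
  hc.mul_left_cancel <| ν.isUnit.mul_left_cancel <| sub_right_inj.mp (h.trans h'.symm)

theorem Function.Periodic.eq_of_eq_on_window {α : Type*} {u v : ℤ → α} {c : ℤ} (hc : 0 < c)
    (hu : Function.Periodic u c) (hv : Function.Periodic v c)
    (h : ∀ j, 0 ≤ j → j < c → u j = v j) : u = v := by
  funext j
  have hmod : j % c = j - (j / c) • c := by rw [Int.emod_def, smul_eq_mul, mul_comm]
  calc u j = u (j % c) := by rw [hmod, hu.sub_zsmul_eq]
    _ = v (j % c) := h _ (Int.emod_nonneg j hc.ne') (Int.emod_lt_of_pos j hc)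
    _ = v j := by rw [hmod, hv.sub_zsmul_eq]

section Frieze

variable {D : Type*} {n : ℕ} {f : ℕ → ℤ → D}

theorem frieze_row_last_eq_row_one (hn : 1 ≤ n)
    (hper : ∀ (i : ℕ) (j : ℤ), 1 ≤ i → i ≤ n → f i j = f (n - i + 1) (j + (i : ℤ) + 1))
    (j : ℤ) : f n j = f 1 (j + n + 1) := by
  simpa using hper n j hn le_rfl

theorem frieze_row_one_periodic (hn : 1 ≤ n)
    (hper : ∀ (i : ℕ) (j : ℤ), 1 ≤ i → i ≤ n → f i j = f (n - i + 1) (j + (i : ℤ) + 1)) :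
    Function.Periodic (f 1) (n + 3) := by
  intro j
  have hfirst : f 1 j = f n (j + 2) := by
    simpa [Nat.sub_add_cancel hn, add_assoc, one_add_one_eq_two] using hper 1 j le_rfl hn
  rw [hfirst, frieze_row_last_eq_row_one hn hper]
  ring_nf

theorem frieze_eq_of_row_one_eq_on_interval [Ring D] {g : ℕ → ℤ → D} (ν : Dˣ)
    (hf0 : ∀ j : ℤ, f 0 j = 1) (hg0 : ∀ j : ℤ, g 0 j = 1)
    (hfrel : ∀ (i : ℕ) (j : ℤ), 1 ≤ i → i ≤ n →
      f i j * f i (j + 1) - (ν : D) * (f (i - 1) (j + 1) * f (i + 1) j) = 1)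
    (hgrel : ∀ (i : ℕ) (j : ℤ), 1 ≤ i → i ≤ n →
      g i j * g i (j + 1) - (ν : D) * (g (i - 1) (j + 1) * g (i + 1) j) = 1)
    (hunit : ∀ (i : ℕ) (j : ℤ), 1 ≤ i → i ≤ n → IsUnit (f i j))
    {a : ℤ} {m : ℕ} (hrow : ∀ j, a ≤ j → j ≤ a + m → f 1 j = g 1 j) :
    ∀ i ≤ n + 1, ∀ j, a ≤ j → j + i ≤ a + m + 1 → f i j = g i j := by
  intro i
  induction i using Nat.strong_induction_on with
  | _ i IH =>
    rcases i with _ | _ | k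
    · intro _ j _ _
      rw [hf0, hg0]
    · intro _ j hj hjm
      exact hrow j hj (by omega)
    · intro hk j hj hjm
      have hmid : f (k + 1) j = g (k + 1) j := IH _ (by omega) (by omega) j hj (by omega)
      have hmid' : f (k + 1) (j + 1) = g (k + 1) (j + 1) :=
        IH _ (by omega) (by omega) (j + 1) (by omega) (by omega)
      have htop : f k (j + 1) = g k (j + 1) :=
        IH _ (by omega) (by omega) (j + 1) (by omega) (by omega)
      have htop_unit : IsUnit (f k (j + 1)) := by
        rcases Nat.eq_zero_or_pos k with rfl | hk0
        · rw [hf0]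
          exact isUnit_one
        · exact hunit k (j + 1) hk0 (by omega)
      have hfk := hfrel (k + 1) j (by omega) (by omega)
      have hgk := hgrel (k + 1) j (by omega) (by omega)
      rw [Nat.add_sub_cancel, ← hmid, ← hmid', ← htop] at hgk
      rw [Nat.add_sub_cancel] at hfk
      exact eq_of_frieze_relation ν htop_unit hfk hgk

end Frieze

theorem periodic_quantum_frieze_pattern_determined_by_mouth_general
    (n : ℕ) (hn : 1 ≤ n)
    (D : Type*) [Ring D] (ν : Dˣ)
    (f g : ℕ → ℤ → D)
    (hf0 : ∀ j : ℤ, f 0 j = 1)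
    (hfrel : ∀ (i : ℕ) (j : ℤ), 1 ≤ i → i ≤ n →
      f i j * f i (j + 1) - (ν : D) * (f (i - 1) (j + 1) * f (i + 1) j) = 1)
    (hfper : ∀ (i : ℕ) (j : ℤ), 1 ≤ i → i ≤ n →
      f i j = f (n - i + 1) (j + (i : ℤ) + 1))
    (hg0 : ∀ j : ℤ, g 0 j = 1)
    (hgrel : ∀ (i : ℕ) (j : ℤ), 1 ≤ i → i ≤ n →
      g i j * g i (j + 1) - (ν : D) * (g (i - 1) (j + 1) * g (i + 1) j) = 1)
    (hgper : ∀ (i : ℕ) (j : ℤ), 1 ≤ i → i ≤ n →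
      g i j = g (n - i + 1) (j + (i : ℤ) + 1))
    (hunit : ∀ (i : ℕ) (j : ℤ), 1 ≤ i → i ≤ n → IsUnit (f i j))
    (hinit : ∀ j : ℤ, 0 ≤ j → j ≤ n → f 1 j = g 1 j) :
    ∀ (i : ℕ) (j : ℤ), i ≤ n + 1 → f i j = g i j := by
  have hlast : ∀ j : ℤ, 0 ≤ j → j ≤ 1 → f n j = g n j := fun j hj0 hj1 =>
    frieze_eq_of_row_one_eq_on_interval ν hf0 hg0 hfrel hgrel hunit (a := 0) (m := n)
      (by simpa using hinit) n (by omega) j hj0 (by omega)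
  have hwindow : ∀ j : ℤ, 0 ≤ j → j < n + 3 → f 1 j = g 1 j := by
    intro j hj0 hj
    rcases le_or_gt j n with hjn | hjn
    · exact hinit j hj0 hjn
    · have hshift : j = (j - n - 1) + n + 1 := by ring
      rw [hshift, ← frieze_row_last_eq_row_one hn hfper, ← frieze_row_last_eq_row_one hn hgper]
      exact hlast _ (by omega) (by omega)
  have hrow : f 1 = g 1 :=
    (frieze_row_one_periodic hn hfper).eq_of_eq_on_window (by omega)
      (frieze_row_one_periodic hn hgper) hwindow
  intro i j hi
  exact frieze_eq_of_row_one_eq_on_interval ν hf0 hg0 hfrel hgrel hunit (a := j) (m := i)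
    (fun k _ _ => congrFun hrow k) i hi j le_rfl (by omega)

/-- A φ-periodic quantum frieze pattern (for the linearly oriented type `A_n` quiver) with
invertible values is entirely determined by its values on the set `{(1,j) : 0 ≤ j ≤ n}`. -/
theorem periodic_quantum_frieze_pattern_determined_by_mouth
    (n : ℕ) (hn : 1 ≤ n)
    (D : Type*) [Ring D] (ν : Dˣ) (hcen : ∀ r : D, (ν : D) * r = r * (ν : D))
    (f g : ℕ → ℤ → D)
    (hf0 : ∀ j : ℤ, f 0 j = 1) (hfn : ∀ j : ℤ, f (n + 1) j = 1)
    (hfrel : ∀ (i : ℕ) (j : ℤ), 1 ≤ i → i ≤ n →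
      f i j * f i (j + 1) - (ν : D) * (f (i - 1) (j + 1) * f (i + 1) j) = 1)
    (hfper : ∀ (i : ℕ) (j : ℤ), 1 ≤ i → i ≤ n →
      f i j = f (n - i + 1) (j + (i : ℤ) + 1))
    (hg0 : ∀ j : ℤ, g 0 j = 1) (hgn : ∀ j : ℤ, g (n + 1) j = 1)
    (hgrel : ∀ (i : ℕ) (j : ℤ), 1 ≤ i → i ≤ n →
      g i j * g i (j + 1) - (ν : D) * (g (i - 1) (j + 1) * g (i + 1) j) = 1)
    (hgper : ∀ (i : ℕ) (j : ℤ), 1 ≤ i → i ≤ n →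
      g i j = g (n - i + 1) (j + (i : ℤ) + 1))
    (hunit : ∀ (i : ℕ) (j : ℤ), 1 ≤ i → i ≤ n → IsUnit (f i j))
    (hinit : ∀ j : ℤ, 0 ≤ j → j ≤ n → f 1 j = g 1 j) :
    ∀ (i : ℕ) (j : ℤ), i ≤ n + 1 → f i j = g i j :=
  periodic_quantum_frieze_pattern_determined_by_mouth_general n hn D ν f g hf0 hfrel hfper hg0 hgrel
    hgper hunit hinit
end

section
/- Mutating the incidence matrix of the linearly oriented type A_n quiver successively at the vertices 1, 2, …, n returns the original matrix: B^{n+1} = B, i.e., (μ_n ∘ μ_{n−1} ∘ ⋯ ∘ μ_1)(B) = B. -/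
/-- The incidence matrix of the linearly oriented type `A_n` quiver (0-indexed):
`b i j = 1` if `j = i + 1`, `b i j = -1` if `j = i - 1`, and `b i j = 0` otherwise. -/
def incidenceA (n : ℕ) : Matrix (Fin n) (Fin n) ℤ := fun i j =>
  if (j : ℕ) = (i : ℕ) + 1 then 1 else if (i : ℕ) = (j : ℕ) + 1 then -1 else 0

/-- Matrix mutation in the direction `k`:
`μ_k(C) i j = -C i j` if `i = k` or `j = k`, and
`μ_k(C) i j = C i j + (|C i k| * C k j + C i k * |C k j|) / 2` otherwise. -/
def matMutation (n : ℕ) (k : Fin n) (C : Matrix (Fin n) (Fin n) ℤ) :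
    Matrix (Fin n) (Fin n) ℤ := fun i j =>
  if i = k ∨ j = k then -C i j
  else C i j + (|C i k| * C k j + C i k * |C k j|) / 2

/-- The sequence of mutated matrices: `Bseq n 0 = B` is the incidence matrix of the
linearly oriented type `A_n` quiver (so `Bseq n k` is `B^{k+1}` in 1-indexed notation),
and `Bseq n (k+1) = μ_k (Bseq n k)` (mutations performed at the vertices `0, 1, …, n-1`
successively, i.e. `1, 2, …, n` in 1-indexed notation). -/
def Bseq (n : ℕ) : ℕ → Matrix (Fin n) (Fin n) ℤ
  | 0 => incidenceA n
  | k + 1 => if h : k < n then matMutation n ⟨k, h⟩ (Bseq n k) else Bseq n k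

/-!
Write `B_m` for the incidence matrix with the arrow between `m - 1` and `m` reversed, so that
`B_0 = B_n = B`. In the quiver of `B_m` the vertex `m` is a source, and at a source the
correction term `(|c_{ik}| c_{kj} + c_{ik} |c_{kj}|) / 2` vanishes, so mutating `B_m` at `m`
only reverses the two arrows at `m`, which gives `B_{m+1}`.
-/

lemma mutation_term_eq_zero_of_mul_nonpos {a b : ℤ} (h : a * b ≤ 0) :
    (|a| * b + a * |b|) / 2 = 0 := by
  suffices |a| * b + a * |b| = 0 by rw [this, Int.zero_ediv]
  rcases le_total 0 a with ha | ha <;> rcases le_total 0 b with hb | hb <;>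
    simp only [abs_of_nonneg, abs_of_nonpos, ha, hb] <;> nlinarith

lemma matMutation_apply_of_mul_nonpos {n : ℕ} {k i j : Fin n} {C : Matrix (Fin n) (Fin n) ℤ}
    (h : C i k * C k j ≤ 0) :
    matMutation n k C i j = if i = k ∨ j = k then -C i j else C i j := by
  simp only [matMutation, mutation_term_eq_zero_of_mul_nonpos h, add_zero]

/-- The incidence matrix of the linearly oriented `A_n` quiver with the arrow between `m - 1`
and `m` reversed: the only nonzero entries with `max i j = m` are those of that arrow. -/
def flipIncidenceA (n m : ℕ) : Matrix (Fin n) (Fin n) ℤ := fun i j =>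
  if max (i : ℕ) j = m then -incidenceA n i j else incidenceA n i j

lemma flipIncidenceA_zero (n : ℕ) : flipIncidenceA n 0 = incidenceA n := by
  ext i j
  simp only [flipIncidenceA, incidenceA]
  split_ifs <;> omega

lemma flipIncidenceA_self (n : ℕ) : flipIncidenceA n n = incidenceA n := by
  ext i j
  have := i.isLt
  simp only [flipIncidenceA]
  split_ifs <;> omega

lemma flipIncidenceA_col_nonpos {n m : ℕ} (i j : Fin n) (hj : (j : ℕ) = m) :
    flipIncidenceA n m i j ≤ 0 := by
  simp only [flipIncidenceA, incidenceA]
  split_ifs <;> omega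

lemma flipIncidenceA_row_nonneg {n m : ℕ} (i j : Fin n) (hi : (i : ℕ) = m) :
    0 ≤ flipIncidenceA n m i j := by
  simp only [flipIncidenceA, incidenceA]
  split_ifs <;> omega

lemma matMutation_flipIncidenceA {n : ℕ} (k : Fin n) :
    matMutation n k (flipIncidenceA n k) = flipIncidenceA n (k + 1) := by
  ext i j
  have hsource : flipIncidenceA n k i k * flipIncidenceA n k k j ≤ 0 :=
    mul_nonpos_of_nonpos_of_nonneg (flipIncidenceA_col_nonpos i k rfl)
      (flipIncidenceA_row_nonneg k j rfl)
  rw [matMutation_apply_of_mul_nonpos hsource]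
  simp only [flipIncidenceA, incidenceA, Fin.ext_iff]
  split_ifs <;> omega

lemma Bseq_eq_flipIncidenceA {n k : ℕ} (hk : k ≤ n) : Bseq n k = flipIncidenceA n k := by
  induction k with
  | zero => exact (flipIncidenceA_zero n).symm
  | succ k ih =>
    rw [Bseq, dif_pos (Nat.lt_of_succ_le hk), ih (Nat.le_of_succ_le hk)]
    exact matMutation_flipIncidenceA ⟨k, hk⟩

theorem mutation_sequence_returns_initial_matrix_general (n : ℕ) :
    Bseq n n = incidenceA n := by
  rw [Bseq_eq_flipIncidenceA le_rfl, flipIncidenceA_self]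

/-- Mutating the incidence matrix of the linearly oriented type `A_n` quiver successively
at the vertices `1, 2, …, n` returns the original matrix: `B^{n+1} = B`. -/
theorem mutation_sequence_returns_initial_matrix (n : ℕ) (hn : 2 ≤ n) :
    Bseq n n = incidenceA n :=
  mutation_sequence_returns_initial_matrix_general n
end
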